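/- arXiv:1811.02717 — 5 statements merged into one kernel-verified Lean document; each statement's English description precedes it below -/
import Mathlib

section
/- Let a < b be real numbers, Ψ : ℝ → ℝ strictly increasing and continuously differentiable on [a,b] with Ψ'(t) > 0 for all t ∈ [a,b], and let α > 0. Suppose f = h ∘ Ψ where h : ℝ → ℝ is real-analytic with power series converging on all of ℝ, and write f⁽ⁿ⁾(x) := h⁽ⁿ⁾(Ψ(x)). Then for every x ∈ (a,b], the Ψ-Riemann–Liouville fractional integral of f admits the convergent series expansion (I^{α;Ψ} f)(x) = Σ_{n=0}^∞ binom(−α, n) · f⁽ⁿ⁾(x) · (Ψ(x) − Ψ(a))^{α+n} / Γ(α+n+1). -/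
/-!
The substitution `u = Ψ t` turns `I^{α;Ψ} f (x)` into
`Γ(α)⁻¹ ∫_{Ψ a}^{Ψ x} (Ψ x - u)^(α-1) h(u) du`. Expanding `h` in its Taylor series at `Ψ x`, the
`n`-th term integrates to `(-1)^n h⁽ⁿ⁾(Ψ x) / n! · (Ψ x - Ψ a)^(α+n) / (α+n)`. The integrals of
the absolute values are dominated by `∑ |h⁽ⁿ⁾(Ψ x)| / n! · (Ψ x - Ψ a)^n`, which converges because
the Taylor series has infinite radius, so sum and integral may be exchanged. Finally `(-1)^n / (n! Γ(α) (α+n)) = binom(-α, n) / Γ(α+n+1)`.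
-/

open Real

/-- Generalized binomial coefficient `binom(γ, n) = γ(γ-1)⋯(γ-n+1)/n!`. -/
noncomputable def genBinom (γ : ℝ) (n : ℕ) : ℝ :=
  (∏ i ∈ Finset.range n, (γ - (i : ℝ))) / (n.factorial : ℝ)

/-- Ψ-Riemann–Liouville fractional integral of order `α` with base point `a`;
by convention the order-0 integral is the identity. -/
noncomputable def psiI (a : ℝ) (Ψ f : ℝ → ℝ) (α : ℝ) (x : ℝ) : ℝ :=
  if α = 0 then f x
  else (Real.Gamma α)⁻¹ * ∫ t in a..x, deriv Ψ t * (Ψ x - Ψ t) ^ (α - 1) * f t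

/-- Ψ-Riemann–Liouville fractional derivative of order `γ` (for `γ ≤ 0` it is the
fractional integral of order `-γ`, the order-0 case being the identity). -/
noncomputable def psiRLD (a : ℝ) (Ψ f : ℝ → ℝ) (γ : ℝ) (x : ℝ) : ℝ :=
  if γ ≤ 0 then psiI a Ψ f (-γ) x
  else (deriv Ψ x)⁻¹ * deriv (fun y => psiI a Ψ f (1 - γ) y) x

/-- Ψ-Caputo fractional derivative of order `γ` (for `γ ≤ 0` it is the
fractional integral of order `-γ`). -/
noncomputable def psiCD (a : ℝ) (Ψ f : ℝ → ℝ) (γ : ℝ) (x : ℝ) : ℝ :=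
  if γ ≤ 0 then psiI a Ψ f (-γ) x
  else psiI a Ψ (fun t => (deriv Ψ t)⁻¹ * deriv f t) (1 - γ) x

/-- Ψ-Hilfer fractional derivative of order `α` and type `β`. -/
noncomputable def psiHD (a : ℝ) (Ψ f : ℝ → ℝ) (α β : ℝ) (x : ℝ) : ℝ :=
  psiI a Ψ
    (fun y => (deriv Ψ y)⁻¹ * deriv (fun z => psiI a Ψ f ((1 - β) * (1 - α)) z) y)
    (β * (1 - α)) x

/-- Classical Riemann–Liouville fractional integral with base point `a`. -/
noncomputable def rlI (a : ℝ) (α : ℝ) (f : ℝ → ℝ) (x : ℝ) : ℝ :=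
  if α = 0 then f x
  else (Real.Gamma α)⁻¹ * ∫ t in a..x, (x - t) ^ (α - 1) * f t

/-- Classical Riemann–Liouville fractional derivative (fractional integral for `γ ≤ 0`). -/
noncomputable def rlD (a : ℝ) (γ : ℝ) (f : ℝ → ℝ) (x : ℝ) : ℝ :=
  if γ ≤ 0 then rlI a (-γ) f x
  else deriv (fun y => rlI a (1 - γ) f y) x

/-- Classical Caputo fractional derivative (fractional integral for `γ ≤ 0`). -/
noncomputable def capD (a : ℝ) (γ : ℝ) (f : ℝ → ℝ) (x : ℝ) : ℝ :=
  if γ ≤ 0 then rlI a (-γ) f x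
  else rlI a (1 - γ) (deriv f) x

/-- Classical Hilfer fractional derivative of order `α` and type `β`. -/
noncomputable def hilD (a : ℝ) (α β : ℝ) (f : ℝ → ℝ) (x : ℝ) : ℝ :=
  rlI a (β * (1 - α))
    (fun y => deriv (fun z => rlI a ((1 - β) * (1 - α)) f z) y) x

/-- Hadamard fractional integral with base point `a`. -/
noncomputable def hadI (a : ℝ) (α : ℝ) (f : ℝ → ℝ) (x : ℝ) : ℝ :=
  if α = 0 then f x
  else (Real.Gamma α)⁻¹ * ∫ t in a..x, (Real.log x - Real.log t) ^ (α - 1) * f t / t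

/-- Caputo–Hadamard fractional derivative (Hadamard fractional integral for `γ ≤ 0`). -/
noncomputable def chD (a : ℝ) (γ : ℝ) (f : ℝ → ℝ) (x : ℝ) : ℝ :=
  if γ ≤ 0 then hadI a (-γ) f x
  else hadI a (1 - γ) (fun t => t * deriv f t) x

/-- `h` is real-analytic with a power series converging on all of `ℝ`. -/
def EntireReal (h : ℝ → ℝ) : Prop :=
  ∃ p : FormalMultilinearSeries ℝ ℝ ℝ, HasFPowerSeriesOnBall h p 0 ⊤

open Set MeasureTheory intervalIntegral

theorem HasFPowerSeriesAt.coeff_eq_iteratedDeriv_div {𝕜 : Type*} [NontriviallyNormedField 𝕜]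
    [CompleteSpace 𝕜] [CharZero 𝕜] {f : 𝕜 → 𝕜} {p : FormalMultilinearSeries 𝕜 𝕜 𝕜} {x : 𝕜}
    (hp : HasFPowerSeriesAt f p x) (n : ℕ) :
    p.coeff n = iteratedDeriv n f x / n.factorial := by
  rw [hp.eq_formalMultilinearSeries hp.analyticAt.hasFPowerSeriesAt,
    FormalMultilinearSeries.coeff_ofScalars]

theorem EntireReal.exists_hasFPowerSeriesOnBall {h : ℝ → ℝ} (hh : EntireReal h) (c : ℝ) :
    ∃ q : FormalMultilinearSeries ℝ ℝ ℝ, HasFPowerSeriesOnBall h q c ⊤ := by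
  obtain ⟨p, hp⟩ := hh
  exact ⟨p.changeOrigin c, by simpa using hp.changeOrigin (y := c) (by simp)⟩

theorem genBinom_neg (γ : ℝ) (n : ℕ) :
    genBinom (-γ) n = (-1) ^ n * (∏ i ∈ Finset.range n, (γ + i)) / n.factorial := by
  simp only [genBinom, neg_sub_left, Finset.prod_neg, Finset.card_range, add_comm γ]

theorem Real.Gamma_add_nat_eq_mul_prod {α : ℝ} (hα : ∀ k : ℕ, α + k ≠ 0) (n : ℕ) :
    Gamma (α + n) = Gamma α * ∏ i ∈ Finset.range n, (α + i) := by
  induction n with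
  | zero => simp
  | succ k ih =>
    rw [Nat.cast_succ, ← add_assoc, Gamma_add_one (hα k), ih, Finset.prod_range_succ]
    ring

theorem genBinom_neg_div_Gamma {α : ℝ} (hα : 0 < α) (n : ℕ) :
    genBinom (-α) n / Gamma (α + n + 1) = (-1) ^ n / (n.factorial * Gamma α * (α + n)) := by
  have hα' : ∀ k : ℕ, α + k ≠ 0 := fun k => by positivity
  rw [genBinom_neg, Gamma_add_one (hα' n), Real.Gamma_add_nat_eq_mul_prod hα']
  have : Gamma α ≠ 0 := (Gamma_pos_of_pos hα).ne'
  have : ∏ i ∈ Finset.range n, (α + i) ≠ 0 := Finset.prod_ne_zero_iff.2 fun k _ => hα' k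
  field_simp

theorem intervalIntegrable_sub_rpow_sub_one {β : ℝ} (hβ : 0 < β) (A B : ℝ) :
    IntervalIntegrable (fun u => (B - u) ^ (β - 1)) volume A B := by
  simpa using (intervalIntegrable_rpow' (a := B - A) (b := B - B) (r := β - 1)
    (by linarith)).comp_sub_left B

theorem integral_sub_rpow_sub_one {β : ℝ} (hβ : 0 < β) (A B : ℝ) :
    ∫ u in A..B, (B - u) ^ (β - 1) = (B - A) ^ β / β := by
  rw [integral_comp_sub_left (fun v => v ^ (β - 1)) B, sub_self,
    integral_rpow (Or.inl (by linarith)), sub_add_cancel, zero_rpow hβ.ne', sub_zero]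

section PowerSeries

variable {h : ℝ → ℝ} {p : FormalMultilinearSeries ℝ ℝ ℝ} {A B α : ℝ} {r : ENNReal}

theorem HasFPowerSeriesOnBall.hasSum_rpow_mul (hp : HasFPowerSeriesOnBall h p B r) {u : ℝ}
    (hu : u < B) (hr : ENNReal.ofReal (B - u) < r) :
    HasSum (fun n : ℕ => (-1) ^ n * p.coeff n * (B - u) ^ (α + n - 1))
      ((B - u) ^ (α - 1) * h u) := by
  have hmem : u - B ∈ Metric.eball (0 : ℝ) r := by
    rwa [Metric.mem_eball, edist_zero_right, ← ofReal_norm, norm_sub_rev,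
      Real.norm_of_nonneg (sub_nonneg.2 hu.le)]
  have hpos : 0 < B - u := sub_pos.2 hu
  have hterm : ∀ n : ℕ, (-1) ^ n * p.coeff n * (B - u) ^ (α + n - 1)
      = (B - u) ^ (α - 1) * p n (fun _ => u - B) := fun n => by
    rw [FormalMultilinearSeries.apply_eq_pow_smul_coeff, smul_eq_mul,
      show u - B = -1 * (B - u) by ring, mul_pow, show α + n - 1 = α - 1 + n by ring,
      rpow_add hpos, rpow_natCast]
    ring
  simpa [hterm] using (hp.hasSum hmem).mul_left ((B - u) ^ (α - 1))

theorem HasFPowerSeriesOnBall.hasSum_integral_sub_rpow_mul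
    (hp : HasFPowerSeriesOnBall h p B r) (hα : 0 < α) (hAB : A ≤ B)
    (hr : ENNReal.ofReal (B - A) < r) :
    HasSum (fun n : ℕ => (-1) ^ n * p.coeff n * ((B - A) ^ (α + n) / (α + n)))
      (∫ u in A..B, (B - u) ^ (α - 1) * h u) := by
  set F : ℕ → ℝ → ℝ := fun n u => (-1) ^ n * p.coeff n * (B - u) ^ (α + n - 1)
  have hαn : ∀ n : ℕ, 0 < α + n := fun n => by positivity
  have hint : ∀ n, IntegrableOn (F n) (Ioo A B) := fun n =>
    (((intervalIntegrable_iff_integrableOn_Ioc_of_le hAB).1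
      (intervalIntegrable_sub_rpow_sub_one (hαn n) A B)).mono_set
      Ioo_subset_Ioc_self).const_mul _
  have hnorm : ∀ n, ∫ u in Ioo A B, ‖F n u‖ = ‖p n‖ * ((B - A) ^ (α + n) / (α + n)) := by
    intro n
    rw [← integral_Ioc_eq_integral_Ioo, ← integral_of_le hAB,
      ← integral_sub_rpow_sub_one (hαn n), ← intervalIntegral.integral_const_mul]
    refine integral_congr fun u hu => ?_
    rw [uIcc_of_le hAB] at hu
    simp only [F, norm_mul, norm_pow, norm_neg, norm_one, one_pow, one_mul,
      FormalMultilinearSeries.norm_apply_eq_norm_coef,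
      Real.norm_of_nonneg (rpow_nonneg (sub_nonneg.2 hu.2) _)]
  have hsummable : Summable fun n => ∫ u in Ioo A B, ‖F n u‖ := by
    have hBA : 0 ≤ B - A := sub_nonneg.2 hAB
    have hgeom : Summable fun n => ‖p n‖ * (B - A) ^ n := by
      simpa [Real.coe_toNNReal _ hBA] using
        p.summable_norm_mul_pow (r := (B - A).toNNReal) (hr.trans_le hp.r_le)
    refine .of_nonneg_of_le (fun n => integral_nonneg fun _ => norm_nonneg _) (fun n => ?_)
      (hgeom.mul_right ((B - A) ^ α / α))
    rw [hnorm, rpow_add' hBA (hαn n).ne', rpow_natCast, mul_assoc, mul_comm ((B - A) ^ α),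
      mul_div_assoc]
    gcongr
    exact le_add_of_nonneg_right (Nat.cast_nonneg (α := ℝ) n)
  have hF : ∀ u ∈ Ioo A B, HasSum (fun n => F n u) ((B - u) ^ (α - 1) * h u) := fun u hu =>
    hp.hasSum_rpow_mul hu.2 ((ENNReal.ofReal_le_ofReal (by linarith [hu.1])).trans_lt hr)
  have hterm : ∀ n, ∫ u in Ioo A B, F n u
      = (-1) ^ n * p.coeff n * ((B - A) ^ (α + n) / (α + n)) := by
    intro n
    rw [MeasureTheory.integral_const_mul, ← integral_Ioc_eq_integral_Ioo, ← integral_of_le hAB,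
      integral_sub_rpow_sub_one (hαn n)]
  rw [integral_of_le hAB, integral_Ioc_eq_integral_Ioo,
    ← setIntegral_congr_fun measurableSet_Ioo fun u hu => (hF u hu).tsum_eq]
  simpa only [hterm] using hasSum_integral_of_summable_integral_norm hint hsummable

end PowerSeries

theorem psiI_comp_eq_integral {a x α : ℝ} {Ψ g : ℝ → ℝ} (hα : α ≠ 0) (hax : a ≤ x)
    (hΨ : ContinuousOn Ψ (Icc a x)) (hΨd : ∀ t ∈ Ioo a x, DifferentiableAt ℝ Ψ t)
    (hΨ' : ∀ t ∈ Ioo a x, 0 ≤ deriv Ψ t) :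
    psiI a Ψ (fun t => g (Ψ t)) α x
      = (Gamma α)⁻¹ * ∫ u in Ψ a..Ψ x, (Ψ x - u) ^ (α - 1) * g u := by
  rw [psiI, if_neg hα]
  congr 1
  have hsubst := integral_comp_mul_deriv_of_deriv_nonneg (f' := deriv Ψ)
    (g := fun u => (Ψ x - u) ^ (α - 1) * g u) (by rwa [uIcc_of_le hax])
    (by simpa [hax] using fun t ht₁ ht₂ => (hΨd t ⟨ht₁, ht₂⟩).hasDerivAt)
    (by simpa [hax] using hΨ')
  rw [← hsubst]
  congr 1 with t
  simp only [Function.comp_apply]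
  ring

theorem psiI_series_expansion_general
    (a b : ℝ) (Ψ : ℝ → ℝ)
    (hΨmono : StrictMonoOn Ψ (Set.Icc a b))
    (hΨC1 : ContDiffOn ℝ 1 Ψ (Set.Icc a b))
    (hΨpos : ∀ t ∈ Set.Icc a b, 0 < deriv Ψ t)
    (α : ℝ) (hα : 0 < α)
    (f h : ℝ → ℝ) (hf : f = fun t => h (Ψ t))
    (hh : EntireReal h)
    (x : ℝ) (hx : x ∈ Set.Ioc a b) :
    HasSum
      (fun n : ℕ => genBinom (-α) n * iteratedDeriv n h (Ψ x) *
        (Ψ x - Ψ a) ^ (α + n) / Real.Gamma (α + n + 1))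
      (psiI a Ψ f α x) := by
  obtain ⟨hax, hxb⟩ := hx
  have hsub : Icc a x ⊆ Icc a b := Icc_subset_Icc_right hxb
  have hΨd : ∀ t ∈ Ioo a x, DifferentiableAt ℝ Ψ t := fun t ht =>
    (hΨC1.differentiableOn one_ne_zero t (hsub (Ioo_subset_Icc_self ht))).differentiableAt
      (Icc_mem_nhds ht.1 (ht.2.trans_le hxb))
  have hΨax : Ψ a ≤ Ψ x := (hΨmono (hsub (left_mem_Icc.2 hax.le))
    (hsub (right_mem_Icc.2 hax.le)) hax).le
  rw [hf, psiI_comp_eq_integral hα.ne' hax.le (hΨC1.continuousOn.mono hsub) hΨd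
    fun t ht => (hΨpos t (hsub (Ioo_subset_Icc_self ht))).le]
  obtain ⟨q, hq⟩ := hh.exists_hasFPowerSeriesOnBall (Ψ x)
  have hterm : ∀ n : ℕ, genBinom (-α) n * iteratedDeriv n h (Ψ x) *
      (Ψ x - Ψ a) ^ (α + n) / Gamma (α + n + 1)
      = (Gamma α)⁻¹ * ((-1) ^ n * q.coeff n * ((Ψ x - Ψ a) ^ (α + n) / (α + n))) := fun n => by
    rw [hq.hasFPowerSeriesAt.coeff_eq_iteratedDeriv_div, mul_div_right_comm,
      mul_div_right_comm, genBinom_neg_div_Gamma hα]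
    field_simp
  simpa only [hterm] using
    (hq.hasSum_integral_sub_rpow_mul hα hΨax ENNReal.ofReal_lt_top).mul_left (Gamma α)⁻¹

/-- series expansion of the Ψ-Riemann–Liouville fractional integral. -/
theorem psiI_series_expansion
    (a b : ℝ) (hab : a < b) (Ψ : ℝ → ℝ)
    (hΨmono : StrictMonoOn Ψ (Set.Icc a b))
    (hΨC1 : ContDiffOn ℝ 1 Ψ (Set.Icc a b))
    (hΨpos : ∀ t ∈ Set.Icc a b, 0 < deriv Ψ t)
    (α : ℝ) (hα : 0 < α)
    (f h : ℝ → ℝ) (hf : f = fun t => h (Ψ t))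
    (hh : EntireReal h)
    (x : ℝ) (hx : x ∈ Set.Ioc a b) :
    HasSum
      (fun n : ℕ => genBinom (-α) n * iteratedDeriv n h (Ψ x) *
        (Ψ x - Ψ a) ^ (α + n) / Real.Gamma (α + n + 1))
      (psiI a Ψ f α x) :=
  psiI_series_expansion_general a b Ψ hΨmono hΨC1 hΨpos α hα f h hf hh x hx
end

section
/- Let a < b be real numbers, Ψ : ℝ → ℝ strictly increasing and continuously differentiable on [a,b] with Ψ'(t) > 0 for all t ∈ [a,b], and let α > 0. Suppose f = h ∘ Ψ and g = w ∘ Ψ where h, w : ℝ → ℝ are real-analytic with power series converging on all of ℝ, and write f⁽ᵏ⁾(x) := h⁽ᵏ⁾(Ψ(x)). Then for every x ∈ (a,b], the Ψ-Riemann–Liouville fractional integral of the product f·g satisfies (I^{α;Ψ}(f·g))(x) = Σ_{k=0}^∞ binom(−α, k) · f⁽ᵏ⁾(x) · (I^{α+k;Ψ} g)(x), the series converging. -/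
open Real

/-!
Expand `h` in its Taylor series around `Ψ x`: `h (Ψ t) = ∑ₖ h⁽ᵏ⁾(Ψ x) / k! · (Ψ t - Ψ x)ᵏ`.
Against the kernel, `(Ψ x - Ψ t)^(α-1) (Ψ t - Ψ x)ᵏ = (-1)ᵏ (Ψ x - Ψ t)^(α+k-1)`, so the `k`-th term
is `(-1)ᵏ Γ(α+k) / k!` times `I^{α+k;Ψ} g (x)`, and `(-1)ᵏ Γ(α+k) / (Γ(α) k!) = binom(-α, k)`.
Termwise integration is legitimate because `|Ψ t - Ψ x| ≤ Ψ x - Ψ a` on `(a, x)` and the Taylor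
series of an entire function converges absolutely there, so the series is dominated by the
integrable function `|kernel · g| · ∑ₖ |h⁽ᵏ⁾(Ψ x) / k!| (Ψ x - Ψ a)ᵏ`.
-/

open MeasureTheory Set

theorem Real.Gamma_add_nat_eq_prod_mul {α : ℝ} (hα : ∀ m : ℕ, α ≠ -m) (n : ℕ) :
    Gamma (α + n) = (∏ i ∈ Finset.range n, (α + i)) * Gamma α := by
  induction n with
  | zero => simp
  | succ n ih =>
    have hne : α + n ≠ 0 := fun h => hα n (by linarith)
    rw [Nat.cast_succ, ← add_assoc, Real.Gamma_add_one hne, ih, Finset.prod_range_succ]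
    ring

theorem genBinom_neg_s1 {α : ℝ} (hα : ∀ m : ℕ, α ≠ -m) (k : ℕ) :
    genBinom (-α) k = (-1) ^ k * Gamma (α + k) / (Gamma α * k.factorial) := by
  have hprod : ∏ i ∈ Finset.range k, (-α - i) = (-1) ^ k * ∏ i ∈ Finset.range k, (α + i) := by
    have hfactor : ∀ i : ℕ, -α - i = -1 * (α + i) := fun i => by ring
    simp only [hfactor, Finset.prod_mul_distrib, Finset.prod_const, Finset.card_range]
  rw [genBinom, hprod, Real.Gamma_add_nat_eq_prod_mul hα, mul_comm (Gamma α) (k.factorial : ℝ),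
    ← mul_assoc, mul_div_mul_right _ _ (Real.Gamma_ne_zero hα)]

theorem Real.rpow_sub_one_mul_neg_pow {s : ℝ} (hs : 0 < s) (β : ℝ) (k : ℕ) :
    s ^ (β - 1) * (-s) ^ k = (-1) ^ k * s ^ (β + k - 1) := by
  rw [neg_pow, add_sub_right_comm, Real.rpow_add_natCast hs.ne']
  ring

theorem HasFPowerSeriesOnBall.coeff_eq_iteratedDeriv_div {𝕜 : Type*}
    [NontriviallyNormedField 𝕜] [CompleteSpace 𝕜] [CharZero 𝕜] {h : 𝕜 → 𝕜}
    {q : FormalMultilinearSeries 𝕜 𝕜 𝕜} {y : 𝕜} {r : ENNReal}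
    (hq : HasFPowerSeriesOnBall h q y r) (k : ℕ) :
    q.coeff k = iteratedDeriv k h y / k.factorial := by
  have hk : (k.factorial : 𝕜) ≠ 0 := Nat.cast_ne_zero.2 k.factorial_ne_zero
  rw [eq_div_iff hk, iteratedDeriv_eq_iteratedFDeriv, ← hq.factorial_smul 1 k,
    FormalMultilinearSeries.apply_eq_pow_smul_coeff]
  simp [nsmul_eq_mul, mul_comm]

namespace EntireReal

variable {h : ℝ → ℝ}

theorem hasFPowerSeriesOnBall (hh : EntireReal h) (y : ℝ) :
    ∃ q : FormalMultilinearSeries ℝ ℝ ℝ, HasFPowerSeriesOnBall h q y ⊤ := by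
  obtain ⟨p, hp⟩ := hh
  exact ⟨p.changeOrigin y, by simpa using hp.changeOrigin (y := y) ENNReal.coe_lt_top⟩

theorem continuous (hh : EntireReal h) : Continuous h := by
  obtain ⟨p, hp⟩ := hh
  simpa [Metric.eball_top, continuousOn_univ] using hp.continuousOn

theorem hasSum_taylorSeries (hh : EntireReal h) (y u : ℝ) :
    HasSum (fun k => iteratedDeriv k h y / k.factorial * (u - y) ^ k) (h u) := by
  obtain ⟨q, hq⟩ := hh.hasFPowerSeriesOnBall y
  have hsum := hq.hasSum (y := u - y) (by simp)
  simp only [FormalMultilinearSeries.apply_eq_pow_smul_coeff, smul_eq_mul,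
    hq.coeff_eq_iteratedDeriv_div, add_sub_cancel] at hsum
  simpa only [mul_comm] using hsum

theorem summable_taylorSeries_norm_mul_pow (hh : EntireReal h) (y : ℝ) {R : ℝ} (hR : 0 ≤ R) :
    Summable (fun k => ‖iteratedDeriv k h y / k.factorial‖ * R ^ k) := by
  obtain ⟨q, hq⟩ := hh.hasFPowerSeriesOnBall y
  have hs := q.summable_norm_mul_pow (r := R.toNNReal) (hq.r_le.trans_lt' ENNReal.coe_lt_top)
  simpa [FormalMultilinearSeries.norm_apply_eq_norm_coef, hq.coeff_eq_iteratedDeriv_div,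
    Real.coe_toNNReal _ hR] using hs

end EntireReal

theorem MeasureTheory.hasSum_integral_mul_tsum_mul_pow {X : Type*} [MeasurableSpace X]
    {μ : Measure X} {F r : X → ℝ} {c : ℕ → ℝ} {R : ℝ} (hF : Integrable F μ)
    (hr : AEStronglyMeasurable r μ) (hrR : ∀ᵐ t ∂μ, |r t| ≤ R)
    (hc : Summable fun k => ‖c k‖ * R ^ k) :
    HasSum (fun k => c k * ∫ t, F t * r t ^ k ∂μ) (∫ t, F t * ∑' k, c k * r t ^ k ∂μ) := by
  have hpow : ∀ k : ℕ, ∀ᵐ t ∂μ, ‖r t ^ k‖ ≤ R ^ k := fun k => hrR.mono fun t ht => by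
    rw [norm_pow, Real.norm_eq_abs]
    exact pow_le_pow_left₀ (abs_nonneg _) ht k
  have hint : ∀ k : ℕ, Integrable (fun t => c k * (F t * r t ^ k)) μ := fun k =>
    (hF.mul_bdd (hr.pow k) (hpow k)).const_mul (c k)
  have hnorm : ∀ k : ℕ, ∫ t, ‖c k * (F t * r t ^ k)‖ ∂μ ≤ (‖c k‖ * R ^ k) * ∫ t, ‖F t‖ ∂μ := by
    intro k
    rw [← integral_const_mul]
    refine integral_mono_ae (hint k).norm (hF.norm.const_mul _) ((hpow k).mono fun t ht => ?_)
    dsimp only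
    rw [norm_mul, norm_mul, mul_comm ‖F t‖, ← mul_assoc]
    gcongr
  have hsum := hasSum_integral_of_summable_integral_norm hint
    (Summable.of_nonneg_of_le (fun k => integral_nonneg fun t => norm_nonneg _) hnorm
      (hc.mul_right _))
  have hswap : ∀ t, ∑' k, c k * (F t * r t ^ k) = F t * ∑' k, c k * r t ^ k := fun t => by
    rw [← tsum_mul_left]
    exact tsum_congr fun k => by ring
  simpa only [integral_const_mul, hswap] using hsum

theorem integrableOn_deriv_mul_rpow_sub {Ψ : ℝ → ℝ} {a x β : ℝ} (hβ : 0 < β)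
    (hcont : ContinuousOn Ψ (Icc a x)) (hdiff : DifferentiableOn ℝ Ψ (Ioo a x))
    (hlt : ∀ t ∈ Ioo a x, Ψ t < Ψ x) (hderiv : ∀ t ∈ Ioo a x, 0 ≤ deriv Ψ t) :
    IntegrableOn (fun t => deriv Ψ t * (Ψ x - Ψ t) ^ (β - 1)) (Ioo a x) := by
  have hanti : ∀ t ∈ Ioo a x, HasDerivAt (fun s => -(β⁻¹ * (Ψ x - Ψ s) ^ β))
      (deriv Ψ t * (Ψ x - Ψ t) ^ (β - 1)) t := by
    intro t ht
    have hΨt := (hdiff.differentiableAt (isOpen_Ioo.mem_nhds ht)).hasDerivAt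
    refine (((hΨt.const_sub (Ψ x)).rpow_const (p := β)
      (Or.inl (sub_pos.2 (hlt t ht)).ne')).const_mul β⁻¹).neg.congr_deriv ?_
    field_simp
  refine (intervalIntegral.integrableOn_deriv_of_nonneg ?_ hanti fun t ht => ?_).mono_set
    Ioo_subset_Ioc_self
  · exact ((continuousOn_const.sub hcont).rpow_const fun _ _ => Or.inr hβ.le).const_mul _ |>.neg
  · exact mul_nonneg (hderiv t ht) (Real.rpow_nonneg (sub_pos.2 (hlt t ht)).le _)

theorem psiI_eq_integral_Ioo {a x β : ℝ} (Ψ f : ℝ → ℝ) (hβ : β ≠ 0) (hax : a ≤ x) :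
    psiI a Ψ f β x =
      (Gamma β)⁻¹ * ∫ t in Ioo a x, deriv Ψ t * (Ψ x - Ψ t) ^ (β - 1) * f t := by
  rw [psiI, if_neg hβ, intervalIntegral.integral_of_le hax, integral_Ioc_eq_integral_Ioo]

theorem setIntegral_mul_pow_sub_eq_psiI_add_nat {Ψ g : ℝ → ℝ} {a x β : ℝ} (hβ : 0 < β)
    (hax : a ≤ x) (hlt : ∀ t ∈ Ioo a x, Ψ t < Ψ x) (k : ℕ) :
    ∫ t in Ioo a x, deriv Ψ t * (Ψ x - Ψ t) ^ (β - 1) * g t * (Ψ t - Ψ x) ^ k =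
      (-1) ^ k * Gamma (β + k) * psiI a Ψ g (β + k) x := by
  have hβk : 0 < β + k := by positivity
  rw [psiI_eq_integral_Ioo _ _ hβk.ne' hax, mul_assoc,
    mul_inv_cancel_left₀ (Gamma_pos_of_pos hβk).ne', ← integral_const_mul]
  refine setIntegral_congr_fun measurableSet_Ioo fun t ht => ?_
  rw [← neg_sub (Ψ x), mul_right_comm, mul_assoc (deriv Ψ t),
    Real.rpow_sub_one_mul_neg_pow (sub_pos.2 (hlt t ht))]
  ring

theorem hasSum_setIntegral_mul_taylorSeries {Ψ g h : ℝ → ℝ} {a x α : ℝ} (hα : 0 < α)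
    (hax : a ≤ x) (hmono : StrictMonoOn Ψ (Icc a x)) (hcont : ContinuousOn Ψ (Icc a x))
    (hdiff : DifferentiableOn ℝ Ψ (Ioo a x)) (hderiv : ∀ t ∈ Ioo a x, 0 ≤ deriv Ψ t)
    (hg : ContinuousOn g (Icc a x)) (hh : EntireReal h) :
    HasSum (fun k => iteratedDeriv k h (Ψ x) / k.factorial *
        ∫ t in Ioo a x, deriv Ψ t * (Ψ x - Ψ t) ^ (α - 1) * g t * (Ψ t - Ψ x) ^ k)
      (∫ t in Ioo a x, deriv Ψ t * (Ψ x - Ψ t) ^ (α - 1) * (h (Ψ t) * g t)) := by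
  have hlt : ∀ t ∈ Ioo a x, Ψ t < Ψ x := fun t ht =>
    hmono (Ioo_subset_Icc_self ht) (right_mem_Icc.2 hax) ht.2
  have hF := (integrableOn_deriv_mul_rpow_sub hα hcont hdiff hlt hderiv).mul_continuousOn_of_subset
    hg measurableSet_Ioo isCompact_Icc Ioo_subset_Icc_self
  have hr : ∀ t ∈ Ioo a x, |Ψ t - Ψ x| ≤ Ψ x - Ψ a := fun t ht => by
    have := hmono.monotoneOn (left_mem_Icc.2 hax) (Ioo_subset_Icc_self ht) ht.1.le
    rw [abs_of_neg (sub_neg.2 (hlt t ht))]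
    linarith
  have hseries := hasSum_integral_mul_tsum_mul_pow (r := fun t => Ψ t - Ψ x) hF
    ((hcont.mono Ioo_subset_Icc_self).sub continuousOn_const |>.aestronglyMeasurable
      measurableSet_Ioo)
    ((ae_restrict_iff' measurableSet_Ioo).2 (ae_of_all _ hr))
    (hh.summable_taylorSeries_norm_mul_pow (Ψ x)
      (sub_nonneg.2 (hmono.monotoneOn (left_mem_Icc.2 hax) (right_mem_Icc.2 hax) hax)))
  have htaylor : ∀ t, deriv Ψ t * (Ψ x - Ψ t) ^ (α - 1) * g t *
      ∑' k, iteratedDeriv k h (Ψ x) / k.factorial * (Ψ t - Ψ x) ^ k =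
        deriv Ψ t * (Ψ x - Ψ t) ^ (α - 1) * (h (Ψ t) * g t) := fun t => by
    rw [(hh.hasSum_taylorSeries (Ψ x) (Ψ t)).tsum_eq]
    ring
  simpa only [htaylor] using hseries

theorem psiI_product_series_general
    (a b : ℝ) (Ψ : ℝ → ℝ)
    (hΨmono : StrictMonoOn Ψ (Set.Icc a b))
    (hΨC1 : ContDiffOn ℝ 1 Ψ (Set.Icc a b))
    (hΨpos : ∀ t ∈ Set.Icc a b, 0 < deriv Ψ t)
    (α : ℝ) (hα : 0 < α)
    (f g h w : ℝ → ℝ)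
    (hf : f = fun t => h (Ψ t)) (hg : g = fun t => w (Ψ t))
    (hh : EntireReal h) (hw : EntireReal w)
    (x : ℝ) (hx : x ∈ Set.Ioc a b) :
    HasSum
      (fun k : ℕ => genBinom (-α) k * iteratedDeriv k h (Ψ x) * psiI a Ψ g (α + k) x)
      (psiI a Ψ (fun t => f t * g t) α x) := by
  obtain ⟨hax, hxb⟩ := hx
  have hsub : Icc a x ⊆ Icc a b := Icc_subset_Icc_right hxb
  have hΨcont : ContinuousOn Ψ (Icc a x) := hΨC1.continuousOn.mono hsub
  have hlt : ∀ t ∈ Ioo a x, Ψ t < Ψ x := fun t ht =>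
    hΨmono (hsub (Ioo_subset_Icc_self ht)) ⟨hax.le, hxb⟩ ht.2
  have hseries := hasSum_setIntegral_mul_taylorSeries (g := g) hα hax.le (hΨmono.mono hsub)
    hΨcont ((hΨC1.differentiableOn one_ne_zero).mono (Ioo_subset_Icc_self.trans hsub))
    (fun t ht => (hΨpos t (hsub (Ioo_subset_Icc_self ht))).le)
    (hg ▸ hw.continuous.comp_continuousOn hΨcont) hh
  have hterm : ∀ k : ℕ, genBinom (-α) k * iteratedDeriv k h (Ψ x) * psiI a Ψ g (α + k) x =
      (Gamma α)⁻¹ * (iteratedDeriv k h (Ψ x) / k.factorial *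
        ∫ t in Ioo a x, deriv Ψ t * (Ψ x - Ψ t) ^ (α - 1) * g t * (Ψ t - Ψ x) ^ k) := by
    intro k
    rw [setIntegral_mul_pow_sub_eq_psiI_add_nat hα hax.le hlt,
      genBinom_neg_s1 fun m => by linarith [m.cast_nonneg (α := ℝ)]]
    field_simp [(Gamma_pos_of_pos hα).ne']
  rw [funext hterm, psiI_eq_integral_Ioo _ _ hα.ne' hax.le, hf]
  exact hseries.mul_left _

/-- Ψ-fractional integral of a product of two functions. -/
theorem psiI_product_series
    (a b : ℝ) (hab : a < b) (Ψ : ℝ → ℝ)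
    (hΨmono : StrictMonoOn Ψ (Set.Icc a b))
    (hΨC1 : ContDiffOn ℝ 1 Ψ (Set.Icc a b))
    (hΨpos : ∀ t ∈ Set.Icc a b, 0 < deriv Ψ t)
    (α : ℝ) (hα : 0 < α)
    (f g h w : ℝ → ℝ)
    (hf : f = fun t => h (Ψ t)) (hg : g = fun t => w (Ψ t))
    (hh : EntireReal h) (hw : EntireReal w)
    (x : ℝ) (hx : x ∈ Set.Ioc a b) :
    HasSum
      (fun k : ℕ => genBinom (-α) k * iteratedDeriv k h (Ψ x) * psiI a Ψ g (α + k) x)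
      (psiI a Ψ (fun t => f t * g t) α x) :=
  psiI_product_series_general a b Ψ hΨmono hΨC1 hΨpos α hα f g h w hf hg hh hw x hx
end

section
/- (Leibniz type rule for the Ψ-Caputo derivative.) Let 0 < α < 1, a < b, Ψ : ℝ → ℝ strictly increasing and continuously differentiable on [a,b] with Ψ'(t) > 0 for all t ∈ [a,b]. Suppose f = h ∘ Ψ and g = w ∘ Ψ with h, w real-analytic with everywhere-convergent power series, and write f⁽ᵐ⁾(x) := h⁽ᵐ⁾(Ψ(x)). Then for every x ∈ (a,b): (^{C}D^{α;Ψ}(f·g))(x) = Σ_{m=0}^∞ binom(α, m) f⁽ᵐ⁾(x) (^{C}D^{α−m;Ψ} g)(x) + g(a)(f(x) − f(a)) (Ψ(x) − Ψ(a))^{−α} / Γ(1−α), the series converging. -/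
/-! Substituting `u = Ψ t` turns the Ψ-fractional integral of `φ ∘ Ψ` into the classical
Riemann–Liouville integral of `φ` from `A = Ψ a` to `X = Ψ x`, and the Ψ-Caputo derivative of
`w ∘ Ψ` into the classical Caputo derivative of `w`; so it suffices to treat `Ψ = id`.
There `Γ(1 - α) · D^α (h w)(X) = ∫_A^X (X - u)^(-α) (h' w + h w')(u) du`. Expanding `h` and `h'`
in their Taylor series `∑ c_m (u - X)^m` at `X` and integrating termwise (the series converge
absolutely on `[A, X]`) gives two series in the moments `∫_A^X (X - u)^(m - α) w'` and
`∫_A^X (X - u)^(m - α) w`. Integrating the `(m + 1)`-st term of the first by parts and adding the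
`m`-th term of the second leaves `α (-1)^m c_(m+1) ∫_A^X (X - u)^(m - α) w`, which is
`Γ(1 - α) binom(α, m + 1) h^(m+1)(X) I^(m+1-α) w(X)`, minus a boundary term
`c_(m+1) (A - X)^(m+1) (X - A)^(-α) w(A)`; by the Taylor series of `h` at `A` the boundary terms
add up to `(h A - h X) (X - A)^(-α) w(A)`. -/

open Real


open Real

open MeasureTheory Set

noncomputable def taylorCoeff (h : ℝ → ℝ) (X : ℝ) (m : ℕ) : ℝ :=
  iteratedDeriv m h X / m.factorial

theorem taylorCoeff_zero (h : ℝ → ℝ) (X : ℝ) : taylorCoeff h X 0 = h X := by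
  simp [taylorCoeff]

theorem taylorCoeff_deriv (h : ℝ → ℝ) (X : ℝ) (m : ℕ) :
    taylorCoeff (deriv h) X m = (m + 1) * taylorCoeff h X (m + 1) := by
  rw [taylorCoeff, taylorCoeff, ← iteratedDeriv_succ', Nat.factorial_succ]
  push_cast
  field_simp

namespace EntireReal

variable {h : ℝ → ℝ}

theorem differentiable (hh : EntireReal h) : Differentiable ℝ h := by
  obtain ⟨p, hp⟩ := hh
  exact fun y => (hp.analyticAt_of_mem (by simp)).differentiableAt

protected theorem deriv (hh : EntireReal h) : EntireReal (_root_.deriv h) := by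
  obtain ⟨p, hp⟩ := hh
  refine ⟨(ContinuousLinearMap.apply ℝ ℝ (1 : ℝ)).compFormalMultilinearSeries p.derivSeries, ?_⟩
  convert (ContinuousLinearMap.apply ℝ ℝ (1 : ℝ)).comp_hasFPowerSeriesOnBall hp.fderiv
  funext y
  simp

theorem exists_hasFPowerSeriesOnBall_taylorCoeff (hh : EntireReal h) (X : ℝ) :
    ∃ q : FormalMultilinearSeries ℝ ℝ ℝ, HasFPowerSeriesOnBall h q X ⊤ ∧
      ∀ n, q.coeff n = taylorCoeff h X n := by
  obtain ⟨p, hp⟩ := hh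
  have hq := hp.changeOrigin (y := X) (by simp)
  rw [zero_add, ENNReal.top_sub_coe] at hq
  refine ⟨_, hq, fun n => ?_⟩
  have hn := hq.factorial_smul (y := (1 : ℝ)) n
  rw [FormalMultilinearSeries.apply_eq_pow_smul_coeff, one_pow, one_smul,
    ← iteratedDeriv_eq_iteratedFDeriv, nsmul_eq_mul] at hn
  rw [taylorCoeff, ← hn]
  field_simp

theorem hasSum_taylorCoeff (hh : EntireReal h) (X u : ℝ) :
    HasSum (fun m => taylorCoeff h X m * (u - X) ^ m) (h u) := by
  obtain ⟨q, hq, hqc⟩ := hh.exists_hasFPowerSeriesOnBall_taylorCoeff X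
  have hu := hq.hasSum (y := u - X) (by simp)
  rw [add_sub_cancel] at hu
  refine hu.congr_fun fun m => ?_
  rw [FormalMultilinearSeries.apply_eq_pow_smul_coeff, hqc, smul_eq_mul, mul_comm]

theorem summable_abs_taylorCoeff_mul_pow (hh : EntireReal h) (X : ℝ) {r : ℝ} (hr : 0 ≤ r) :
    Summable fun m => |taylorCoeff h X m| * r ^ m := by
  obtain ⟨q, hq, hqc⟩ := hh.exists_hasFPowerSeriesOnBall_taylorCoeff X
  have hr' : (r.toNNReal : ENNReal) < q.radius := ENNReal.coe_lt_top.trans_le hq.r_le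
  refine (q.summable_norm_mul_pow hr').congr fun m => ?_
  rw [FormalMultilinearSeries.norm_apply_eq_norm_coef, hqc, Real.norm_eq_abs,
    Real.coe_toNNReal r hr]

end EntireReal

theorem hasSum_setIntegral_pow_mul {s : Set ℝ} (hs : MeasurableSet s) {X r : ℝ}
    (hsr : ∀ u ∈ s, |u - X| ≤ r) {c : ℕ → ℝ} (hc : Summable fun m => |c m| * r ^ m)
    {S ψ : ℝ → ℝ} (hS : ∀ u ∈ s, HasSum (fun m => c m * (u - X) ^ m) (S u))
    (hψ : IntegrableOn ψ s) :
    HasSum (fun m => c m * ∫ u in s, (u - X) ^ m * ψ u) (∫ u in s, S u * ψ u) := by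
  set F : ℕ → ℝ → ℝ := fun m u => c m * ((u - X) ^ m * ψ u)
  have hbound : ∀ m, ∀ u ∈ s, ‖(u - X) ^ m‖ ≤ r ^ m := fun m u hu => by
    rw [norm_pow, Real.norm_eq_abs]
    exact pow_le_pow_left₀ (abs_nonneg _) (hsr u hu) m
  have hF : ∀ m, Integrable (F m) (volume.restrict s) := fun m =>
    (hψ.bdd_mul (by fun_prop) (ae_restrict_of_forall_mem hs (hbound m))).const_mul _
  have hFnorm : ∀ m, ∫ u in s, ‖F m u‖ ≤ |c m| * r ^ m * ∫ u in s, ‖ψ u‖ := fun m => by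
    rw [← integral_const_mul]
    refine setIntegral_mono_on (hF m).norm (hψ.norm.const_mul _) hs fun u hu => ?_
    rw [norm_mul, norm_mul, Real.norm_eq_abs, mul_assoc]
    gcongr
    exact hbound m u hu
  have hsum := hasSum_integral_of_summable_integral_norm hF
    (Summable.of_nonneg_of_le (fun m => integral_nonneg fun u => norm_nonneg _) hFnorm
      (hc.mul_right _))
  have hlim : ∫ u in s, ∑' m, F m u = ∫ u in s, S u * ψ u :=
    setIntegral_congr_fun hs fun u hu => by
      simp only [F, ← mul_assoc, tsum_mul_right, (hS u hu).tsum_eq]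
  rw [hlim] at hsum
  simpa only [F, integral_const_mul] using hsum

theorem intervalIntegrable_sub_rpow {A X e : ℝ} (he : -1 < e) :
    IntervalIntegrable (fun u => (X - u) ^ e) volume A X := by
  simpa using
    (intervalIntegral.intervalIntegrable_rpow' (a := X - A) (b := X - X) he).comp_sub_left X

theorem intervalIntegrable_sub_rpow_mul {A X e : ℝ} (he : -1 < e) {φ : ℝ → ℝ}
    (hφ : ContinuousOn φ (uIcc A X)) :
    IntervalIntegrable (fun u => (X - u) ^ e * φ u) volume A X :=
  (intervalIntegrable_sub_rpow he).mul_continuousOn hφ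

theorem hasSum_integral_sub_rpow_mul {A X e : ℝ} (hAX : A ≤ X) (he : -1 < e) {φ : ℝ → ℝ}
    (hφ : ContinuousOn φ (Icc A X)) {c : ℕ → ℝ} (hc : Summable fun m => |c m| * (X - A) ^ m)
    {S : ℝ → ℝ} (hS : ∀ u ∈ Ioo A X, HasSum (fun m => c m * (u - X) ^ m) (S u)) :
    HasSum (fun m : ℕ => (-1) ^ m * c m * ∫ u in A..X, (X - u) ^ (e + m) * φ u)
      (∫ u in A..X, (X - u) ^ e * (S u * φ u)) := by
  have hψ : IntegrableOn (fun u => (X - u) ^ e * φ u) (Ioo A X) :=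
    ((intervalIntegrable_iff_integrableOn_Ioo_of_le hAX).1
      (intervalIntegrable_sub_rpow_mul he (by rwa [uIcc_of_le hAX])))
  have hsum := hasSum_setIntegral_pow_mul measurableSet_Ioo
    (fun u hu => by rw [abs_sub_comm, abs_of_pos (sub_pos.2 hu.2)]; linarith [hu.1]) hc hS hψ
  simp only [intervalIntegral.integral_of_le hAX, integral_Ioc_eq_integral_Ioo]
  convert hsum using 1
  · funext m
    rw [mul_comm _ (c m), mul_assoc, ← integral_const_mul]
    congr 1
    refine setIntegral_congr_fun measurableSet_Ioo fun u hu => ?_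
    rw [Real.rpow_add (sub_pos.2 hu.2), Real.rpow_natCast,
      show u - X = -1 * (X - u) by ring, mul_pow]
    ring
  · exact setIntegral_congr_fun measurableSet_Ioo fun u _ => by ring

theorem integral_sub_rpow_mul_deriv_eq {A X β : ℝ} (hAX : A ≤ X) (hβ : 0 < β)
    {w w' : ℝ → ℝ} (hwc : ContinuousOn w (Icc A X)) (hw : ∀ u ∈ Ioo A X, HasDerivAt w (w' u) u)
    (hw' : IntervalIntegrable w' volume A X) :
    ∫ u in A..X, (X - u) ^ β * w' u
      = -((X - A) ^ β * w A) + β * ∫ u in A..X, (X - u) ^ (β - 1) * w u := by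
  have hu : ∀ u ∈ Ioo A X, HasDerivAt (fun v => (X - v) ^ β) (-(β * (X - u) ^ (β - 1))) u :=
    fun u hu => by
      simpa using ((hasDerivAt_id u).const_sub X).rpow_const (p := β)
        (Or.inl (sub_pos.2 hu.2).ne')
  have hparts := intervalIntegral.integral_mul_deriv_eq_deriv_mul_of_hasDerivAt
    (u := fun v => (X - v) ^ β)
    ((continuous_const.sub continuous_id).rpow_const fun _ => Or.inr hβ.le).continuousOn
    (by rwa [uIcc_of_le hAX]) (by simpa [hAX] using hu) (by simpa [hAX] using hw)
    ((intervalIntegrable_sub_rpow (by linarith)).const_mul β).neg hw'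
  simp only [hparts, sub_self, Real.zero_rpow hβ.ne', Pi.neg_apply, neg_mul,
    intervalIntegral.integral_neg, mul_assoc, intervalIntegral.integral_const_mul]
  ring

theorem genBinom_succ (γ : ℝ) (n : ℕ) :
    genBinom γ (n + 1) = genBinom γ n * (γ - n) / (n + 1) := by
  simp only [genBinom, Finset.prod_range_succ, Nat.factorial_succ]
  push_cast
  field_simp

theorem genBinom_succ_mul_Gamma {γ : ℝ} (hγ : ∀ n : ℕ, γ ≠ n + 1) (k : ℕ) :
    genBinom γ (k + 1) * Gamma (1 - γ) = (-1) ^ k * γ / (k + 1).factorial * Gamma (k + 1 - γ) := by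
  induction k with
  | zero => simp [genBinom]
  | succ k ih =>
    have hk : (k : ℝ) + 1 - γ ≠ 0 := sub_ne_zero.2 (hγ k).symm
    rw [genBinom_succ, div_mul_eq_mul_div, mul_right_comm, ih, Nat.factorial_succ (k + 1),
      show ((k + 1 : ℕ) : ℝ) + 1 - γ = (k + 1 - γ) + 1 by push_cast; ring, Gamma_add_one hk]
    push_cast
    field_simp
    ring

section ChangeOfVariables

variable {a x : ℝ} (hax : a < x) {Ψ : ℝ → ℝ} (hΨc : ContinuousOn Ψ (Icc a x))
  (hΨm : StrictMonoOn Ψ (Icc a x))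
include hax hΨc hΨm

theorem psiI_comp_eq_rlI (hΨd : ∀ t ∈ Ioo a x, DifferentiableAt ℝ Ψ t) (φ : ℝ → ℝ) (β : ℝ) :
    psiI a Ψ (fun t => φ (Ψ t)) β x = rlI (Ψ a) β φ (Ψ x) := by
  unfold psiI rlI
  split_ifs
  · rfl
  congr 1
  have himage : Ψ '' Ioo a x = Ioo (Ψ a) (Ψ x) := by
    refine (Subset.antisymm ?_ (intermediate_value_Ioo hax.le hΨc))
    rintro _ ⟨t, ht, rfl⟩
    exact ⟨hΨm (left_mem_Icc.2 hax.le) (Ioo_subset_Icc_self ht) ht.1,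
      hΨm (Ioo_subset_Icc_self ht) (right_mem_Icc.2 hax.le) ht.2⟩
  rw [intervalIntegral.integral_of_le hax.le, intervalIntegral.integral_of_le
      (hΨm (left_mem_Icc.2 hax.le) (right_mem_Icc.2 hax.le) hax).le,
    integral_Ioc_eq_integral_Ioo, integral_Ioc_eq_integral_Ioo, ← himage,
    integral_image_eq_integral_deriv_smul_of_monotoneOn measurableSet_Ioo
      (fun t ht => (hΨd t ht).hasDerivAt.hasDerivWithinAt)
      (hΨm.monotoneOn.mono Ioo_subset_Icc_self)]
  simp only [smul_eq_mul, mul_assoc]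

theorem psiCD_comp_eq_capD (hΨd : ∀ t ∈ Ioc a x, DifferentiableAt ℝ Ψ t)
    (hΨ' : ∀ t ∈ Ioc a x, deriv Ψ t ≠ 0) {w : ℝ → ℝ} (hw : Differentiable ℝ w) (γ : ℝ) :
    psiCD a Ψ (fun t => w (Ψ t)) γ x = capD (Ψ a) γ w (Ψ x) := by
  have hΨd' : ∀ t ∈ Ioo a x, DifferentiableAt ℝ Ψ t := fun t ht => hΨd t (Ioo_subset_Ioc_self ht)
  unfold psiCD capD
  split_ifs
  · exact psiI_comp_eq_rlI hax hΨc hΨm hΨd' w (-γ)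
  rw [← psiI_comp_eq_rlI hax hΨc hΨm hΨd' (deriv w) (1 - γ)]
  have hchain : EqOn (fun t => (deriv Ψ t)⁻¹ * deriv (fun s => w (Ψ s)) t)
      (fun t => deriv w (Ψ t)) (Ioc a x) := fun t ht => by
    have hcomp : HasDerivAt (fun s => w (Ψ s)) (deriv w (Ψ t) * deriv Ψ t) t :=
      (hw _).hasDerivAt.comp t (hΨd t ht).hasDerivAt
    dsimp only
    rw [hcomp.deriv, mul_comm, mul_inv_cancel_right₀ (hΨ' t ht)]
  unfold psiI
  split_ifs
  · exact hchain (right_mem_Ioc.2 hax)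
  rw [intervalIntegral.integral_of_le hax.le, intervalIntegral.integral_of_le hax.le,
    setIntegral_congr_fun measurableSet_Ioc fun t ht => by rw [hchain ht]]

end ChangeOfVariables

theorem capD_eq_integral_of_pos {A X γ : ℝ} (hγ0 : 0 < γ) (hγ1 : γ < 1) (φ : ℝ → ℝ) :
    capD A γ φ X = (Gamma (1 - γ))⁻¹ * ∫ u in A..X, (X - u) ^ (-γ) * deriv φ u := by
  rw [capD, if_neg (not_le.2 hγ0), rlI, if_neg (sub_ne_zero.2 hγ1.ne'), sub_sub_cancel_left]

theorem capD_eq_integral_of_neg {A X γ : ℝ} (hγ : γ < 0) (φ : ℝ → ℝ) :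
    capD A γ φ X = (Gamma (-γ))⁻¹ * ∫ u in A..X, (X - u) ^ (-γ - 1) * φ u := by
  rw [capD, if_pos hγ.le, rlI, if_neg (neg_ne_zero.2 hγ.ne)]

theorem integral_sub_rpow_mul_deriv_mul {A X e : ℝ} (he : -1 < e) {h w : ℝ → ℝ}
    (hh : Differentiable ℝ h) (hw : Differentiable ℝ w) (hh' : Continuous (deriv h))
    (hw' : Continuous (deriv w)) :
    ∫ u in A..X, (X - u) ^ e * deriv (fun v => h v * w v) u
      = (∫ u in A..X, (X - u) ^ e * (h u * deriv w u))
        + ∫ u in A..X, (X - u) ^ e * (deriv h u * w u) := by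
  rw [← intervalIntegral.integral_add
    (intervalIntegrable_sub_rpow_mul (φ := fun u => h u * deriv w u) he
      (hh.continuous.mul hw').continuousOn)
    (intervalIntegrable_sub_rpow_mul (φ := fun u => deriv h u * w u) he
      (hh'.mul hw.continuous).continuousOn)]
  congr 1
  funext u
  rw [deriv_fun_mul (hh u) (hw u)]
  ring

theorem leibniz_term_succ {A X α : ℝ} (hAX : A < X) (hα1 : α < 1) {h w : ℝ → ℝ}
    (hw : Differentiable ℝ w) (hw' : Continuous (deriv w)) (m : ℕ) :
    genBinom α (m + 1) * iteratedDeriv (m + 1) h X * capD A (α - (m + 1 : ℕ)) w X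
      = (Gamma (1 - α))⁻¹ *
        ((-1) ^ (m + 1) * taylorCoeff h X (m + 1)
            * (∫ u in A..X, (X - u) ^ (-α + (m + 1 : ℕ)) * deriv w u)
          + (-1) ^ m * taylorCoeff (deriv h) X m * (∫ u in A..X, (X - u) ^ (-α + m) * w u)
          + taylorCoeff h X (m + 1) * (A - X) ^ (m + 1) * ((X - A) ^ (-α) * w A)) := by
  have hm : (0 : ℝ) ≤ m := m.cast_nonneg
  have hΓ : Gamma (1 - α) ≠ 0 := (Gamma_pos_of_pos (by linarith)).ne'
  have hΓm : Gamma (m + 1 - α) ≠ 0 := (Gamma_pos_of_pos (by linarith)).ne'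
  have hbinom : genBinom α (m + 1)
      = (-1) ^ m * α / (m + 1).factorial * Gamma (m + 1 - α) / Gamma (1 - α) := by
    rw [eq_div_iff hΓ, genBinom_succ_mul_Gamma (fun n => by linarith [n.cast_nonneg (α := ℝ)])]
  rw [capD_eq_integral_of_neg (by push_cast; linarith),
    show -(α - ((m + 1 : ℕ) : ℝ)) = m + 1 - α by push_cast; ring,
    show (m + 1 - α) - 1 = -α + m by ring,
    integral_sub_rpow_mul_deriv_eq hAX.le (by push_cast; linarith)
      hw.continuous.continuousOn (fun u _ => (hw u).hasDerivAt) (hw'.intervalIntegrable _ _),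
    show -α + ((m + 1 : ℕ) : ℝ) - 1 = -α + m by push_cast; ring,
    taylorCoeff_deriv, hbinom, Real.rpow_add (sub_pos.2 hAX), Real.rpow_natCast,
    show A - X = -1 * (X - A) by ring, mul_pow, taylorCoeff]
  push_cast
  field_simp
  ring

theorem hasSum_leibniz_capD {A X α : ℝ} (hAX : A < X) (hα0 : 0 < α) (hα1 : α < 1)
    {h w : ℝ → ℝ} (hh : EntireReal h) (hw : EntireReal w) :
    HasSum (fun m : ℕ => genBinom α m * iteratedDeriv m h X * capD A (α - m) w X)
      (capD A α (fun u => h u * w u) X - w A * (h X - h A) * (X - A) ^ (-α) / Gamma (1 - α)) := by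
  have hXA : 0 ≤ X - A := (sub_pos.2 hAX).le
  have hhd := hh.differentiable
  have hwd := hw.differentiable
  have hh'c := hh.deriv.differentiable.continuous
  have hw'c := hw.deriv.differentiable.continuous
  have hexpand_h := hasSum_integral_sub_rpow_mul hAX.le (e := -α) (by linarith)
    hw'c.continuousOn (hh.summable_abs_taylorCoeff_mul_pow X hXA)
    (fun u _ => hh.hasSum_taylorCoeff X u)
  have hexpand_h' := hasSum_integral_sub_rpow_mul hAX.le (e := -α) (by linarith)
    hwd.continuous.continuousOn (hh.deriv.summable_abs_taylorCoeff_mul_pow X hXA)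
    (fun u _ => hh.deriv.hasSum_taylorCoeff X u)
  have hsum := ((((hasSum_nat_add_iff' 1).2 hexpand_h).add hexpand_h').add
    (((hasSum_nat_add_iff' 1).2 (hh.hasSum_taylorCoeff X A)).mul_right
      ((X - A) ^ (-α) * w A))).mul_left (Gamma (1 - α))⁻¹
  have H := (hasSum_nat_add_iff (f := fun m : ℕ =>
    genBinom α m * iteratedDeriv m h X * capD A (α - m) w X) 1).1
    (hsum.congr_fun (leibniz_term_succ hAX hα1 hwd hw'c))
  refine (congrArg (HasSum _) ?_).mpr H
  have hbinom0 : genBinom α 0 = 1 := by simp [genBinom]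
  have hΓ : Gamma (1 - α) ≠ 0 := (Gamma_pos_of_pos (by linarith)).ne'
  simp only [Finset.sum_range_one, pow_zero, one_mul, mul_one, Nat.cast_zero, sub_zero,
    add_zero, hbinom0, iteratedDeriv_zero, taylorCoeff_zero, capD_eq_integral_of_pos hα0 hα1]
  rw [integral_sub_rpow_mul_deriv_mul (by linarith) hhd hwd hh'c hw'c]
  field_simp
  ring

theorem leibniz_psi_Caputo_general
    (a b : ℝ) (α : ℝ) (hα0 : 0 < α) (hα1 : α < 1)
    (Ψ : ℝ → ℝ)
    (hΨmono : StrictMonoOn Ψ (Set.Icc a b))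
    (hΨC1 : ContDiffOn ℝ 1 Ψ (Set.Icc a b))
    (hΨpos : ∀ t ∈ Set.Icc a b, 0 < deriv Ψ t)
    (f g h w : ℝ → ℝ)
    (hf : f = fun t => h (Ψ t)) (hg : g = fun t => w (Ψ t))
    (hh : EntireReal h) (hw : EntireReal w)
    (x : ℝ) (hx : x ∈ Set.Ioo a b) :
    HasSum
      (fun m : ℕ => genBinom α m * iteratedDeriv m h (Ψ x) * psiCD a Ψ g (α - m) x)
      (psiCD a Ψ (fun t => f t * g t) α x -
        g a * (f x - f a) * (Ψ x - Ψ a) ^ (-α) / Real.Gamma (1 - α)) := by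
  subst hf hg
  obtain ⟨hax, hxb⟩ := hx
  have hsub : Icc a x ⊆ Icc a b := Icc_subset_Icc_right hxb.le
  have hΨd : ∀ t ∈ Ioc a x, DifferentiableAt ℝ Ψ t := fun t ht =>
    (hΨC1.differentiableOn one_ne_zero t (Ioc_subset_Icc_self.trans hsub ht)).differentiableAt
      (Icc_mem_nhds ht.1 (ht.2.trans_lt hxb))
  have hcomp : ∀ {φ : ℝ → ℝ}, Differentiable ℝ φ → ∀ γ : ℝ,
      psiCD a Ψ (fun t => φ (Ψ t)) γ x = capD (Ψ a) γ φ (Ψ x) := fun hφ γ =>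
    psiCD_comp_eq_capD hax (hΨC1.continuousOn.mono hsub) (hΨmono.mono hsub) hΨd
      (fun t ht => (hΨpos t (Ioc_subset_Icc_self.trans hsub ht)).ne') hφ γ
  simp only [hcomp hw.differentiable, hcomp (φ := fun u => h u * w u)
    (hh.differentiable.mul hw.differentiable)]
  exact hasSum_leibniz_capD
    (hΨmono (left_mem_Icc.2 (hax.trans hxb).le) (hsub (right_mem_Icc.2 hax.le)) hax)
    hα0 hα1 hh hw

/-- Leibniz type rule for the Ψ-Caputo fractional derivative. -/
theorem leibniz_psi_Caputo
    (a b : ℝ) (hab : a < b) (α : ℝ) (hα0 : 0 < α) (hα1 : α < 1)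
    (Ψ : ℝ → ℝ)
    (hΨmono : StrictMonoOn Ψ (Set.Icc a b))
    (hΨC1 : ContDiffOn ℝ 1 Ψ (Set.Icc a b))
    (hΨpos : ∀ t ∈ Set.Icc a b, 0 < deriv Ψ t)
    (f g h w : ℝ → ℝ)
    (hf : f = fun t => h (Ψ t)) (hg : g = fun t => w (Ψ t))
    (hh : EntireReal h) (hw : EntireReal w)
    (x : ℝ) (hx : x ∈ Set.Ioo a b) :
    HasSum
      (fun m : ℕ => genBinom α m * iteratedDeriv m h (Ψ x) * psiCD a Ψ g (α - m) x)
      (psiCD a Ψ (fun t => f t * g t) α x -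
        g a * (f x - f a) * (Ψ x - Ψ a) ^ (-α) / Real.Gamma (1 - α)) :=
  leibniz_psi_Caputo_general a b α hα0 hα1 Ψ hΨmono hΨC1 hΨpos f g h w hf hg hh hw x hx
end

section
/- (Semigroup property of the Ψ-fractional integral.) Let a < b, Ψ : ℝ → ℝ strictly increasing and continuously differentiable on [a,b] with Ψ'(t) > 0 for all t ∈ [a,b], γ > 0, μ > 0, and f : ℝ → ℝ continuous on [a,b]. Then for every x ∈ (a,b]: (I^{γ;Ψ}(I^{μ;Ψ} f))(x) = (I^{γ+μ;Ψ} f)(x). -/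
open Real

open MeasureTheory Set Function ProbabilityTheory

/-!
The substitution `u = Ψ t` turns `I^{α;Ψ} f` into the classical Riemann–Liouville integral of
`f ∘ Ψ⁻¹` with base point `Ψ a`; since `Ψ` is increasing, this change of variables needs no
integrability assumption. For the classical integral, exchanging the order of integration over
the triangle `a < s ≤ t ≤ x` reduces the semigroup law to the Beta integral
`∫_s^x (x - t)^(γ-1) (t - s)^(μ-1) dt = B(γ, μ) (x - s)^(γ+μ-1)`.
-/

theorem intervalIntegrable_sub_const_rpow {r : ℝ} (hr : -1 < r) (c d : ℝ) :
    IntervalIntegrable (fun u => (u - c) ^ r) volume c d := by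
  simpa using (intervalIntegral.intervalIntegrable_rpow' (a := 0) (b := d - c) hr).comp_sub_right c

theorem intervalIntegrable_const_sub_rpow {r : ℝ} (hr : -1 < r) (c d : ℝ) :
    IntervalIntegrable (fun u => (d - u) ^ r) volume c d := by
  simpa using
    ((intervalIntegral.intervalIntegrable_rpow' (a := 0) (b := d - c) hr).comp_sub_left d).symm

theorem intervalIntegrable_const_sub_rpow_mul_sub_const_rpow {r s c d : ℝ} (hr : -1 < r)
    (hs : -1 < s) (hcd : c < d) :
    IntervalIntegrable (fun u => (d - u) ^ r * (u - c) ^ s) volume c d := by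
  obtain ⟨e, hce, hed⟩ := exists_between hcd
  refine IntervalIntegrable.trans (b := e) ?_ ?_
  · refine ((intervalIntegrable_sub_const_rpow hs c e).continuousOn_mul ?_)
    rw [uIcc_of_le hce.le]
    exact ContinuousOn.rpow_const (by fun_prop) fun u hu => Or.inl (by linarith [hu.2])
  · refine ((intervalIntegrable_const_sub_rpow hr e d).mul_continuousOn ?_)
    rw [uIcc_of_le hed.le]
    exact ContinuousOn.rpow_const (by fun_prop) fun u hu => Or.inl (by linarith [hu.1])

theorem integrableOn_const_sub_rpow_mul_of_norm_le {r c y C : ℝ} {g : ℝ → ℝ} (hr : -1 < r)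
    (hg : AEStronglyMeasurable g (volume.restrict (Ioc c y))) (hC : ∀ s ∈ Ioc c y, ‖g s‖ ≤ C) :
    IntegrableOn (fun s => (y - s) ^ r * g s) (Ioc c y) :=
  (intervalIntegrable_const_sub_rpow hr c y).1.mul_bdd hg
    (ae_restrict_of_forall_mem measurableSet_Ioc hC)

theorem integral_const_sub_rpow_mul_sub_const_rpow {p q c d : ℝ} (hp : 0 < p) (hq : 0 < q)
    (hcd : c < d) :
    ∫ u in c..d, (d - u) ^ (p - 1) * (u - c) ^ (q - 1) = beta p q * (d - c) ^ (p + q - 1) := by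
  have he : 0 < d - c := sub_pos.2 hcd
  have hshift : ∫ u in c..d, (d - u) ^ (p - 1) * (u - c) ^ (q - 1)
      = ∫ v in 0..d - c, v ^ (q - 1) * (d - c - v) ^ (p - 1) := by
    rw [← sub_self c, ← intervalIntegral.integral_comp_sub_right]
    refine intervalIntegral.integral_congr fun u _ => ?_
    rw [sub_sub_sub_cancel_right, mul_comm]
  have hcomplex : ((∫ v in 0..d - c, v ^ (q - 1) * (d - c - v) ^ (p - 1) : ℝ) : ℂ)
      = ∫ v in 0..d - c, (v : ℂ) ^ ((q : ℂ) - 1) * (((d - c : ℝ) : ℂ) - v) ^ ((p : ℂ) - 1) := by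
    rw [← intervalIntegral.integral_ofReal]
    refine intervalIntegral.integral_congr fun v hv => ?_
    rw [uIcc_of_le he.le] at hv
    rw [Complex.ofReal_mul, Complex.ofReal_cpow hv.1, Complex.ofReal_cpow (by linarith [hv.2])]
    push_cast
    ring
  rw [Complex.betaIntegral_scaled _ _ he, Complex.betaIntegral_eq_Gamma_mul_div _ _
    (by simpa using hq) (by simpa using hp)] at hcomplex
  rw [hshift]
  apply Complex.ofReal_injective
  rw [hcomplex, beta, ← Complex.ofReal_add, Complex.Gamma_ofReal, Complex.Gamma_ofReal,
    Complex.Gamma_ofReal, Complex.ofReal_mul, Complex.ofReal_cpow he.le, add_comm q p]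
  push_cast
  ring

theorem Ioc_inter_Ici_of_lt {α : Type*} [LinearOrder α] {a b s : α} (hs : a < s) :
    Ioc a b ∩ Ici s = Icc s b := by
  ext t
  simp only [mem_inter_iff, mem_Ioc, mem_Ici, mem_Icc]
  exact ⟨fun ⟨⟨_, htb⟩, hst⟩ => ⟨hst, htb⟩, fun ⟨hst, htb⟩ => ⟨⟨hs.trans_le hst, htb⟩, hst⟩⟩

section Dirichlet

variable {E : Type*} [NormedAddCommGroup E] {a b : ℝ}

theorem setIntegral_Ioc_indicator_Iic [NormedSpace ℝ E] {G : ℝ → E} {t : ℝ} (ht : t ≤ b) :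
    ∫ s in Ioc a b, (Iic t).indicator G s = ∫ s in Ioc a t, G s := by
  rw [setIntegral_indicator measurableSet_Iic, Ioc_inter_Iic, min_eq_right ht]

theorem setIntegral_Ioc_indicator_Ici [NormedSpace ℝ E] {G : ℝ → E} {s : ℝ} (hs : a < s) :
    ∫ t in Ioc a b, (Ici s).indicator G t = ∫ t in Icc s b, G t := by
  rw [setIntegral_indicator measurableSet_Ici, Ioc_inter_Ici_of_lt hs]

variable {F : ℝ → ℝ → E}

theorem integrable_indicator_le_of_integrableOn_Icc
    (hmeas : AEStronglyMeasurable (uncurry F)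
      ((volume.restrict (Ioc a b)).prod (volume.restrict (Ioc a b))))
    (hsec : ∀ s ∈ Ioo a b, IntegrableOn (F · s) (Icc s b))
    (hnorm : IntegrableOn (fun s => ∫ t in Icc s b, ‖F t s‖) (Ioc a b)) :
    Integrable ({p : ℝ × ℝ | p.2 ≤ p.1}.indicator (uncurry F))
      ((volume.restrict (Ioc a b)).prod (volume.restrict (Ioc a b))) := by
  rw [integrable_prod_iff' (hmeas.indicator (measurableSet_le measurable_snd measurable_fst))]
  constructor
  · have hIoo : ∀ᵐ s ∂(volume.restrict (Ioc a b)), s ∈ Ioo a b := by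
      rw [Measure.restrict_congr_set Ioo_ae_eq_Ioc.symm]
      exact ae_restrict_mem measurableSet_Ioo
    filter_upwards [hIoo] with s hs
    change Integrable ((Ici s).indicator (F · s)) _
    rw [integrable_indicator_iff measurableSet_Ici, IntegrableOn,
      Measure.restrict_restrict measurableSet_Ici, inter_comm, Ioc_inter_Ici_of_lt hs.1]
    exact hsec s hs
  · refine hnorm.congr_fun (fun s hs => ?_) measurableSet_Ioc
    change _ = ∫ t in Ioc a b, ‖(Ici s).indicator (F · s) t‖
    simp_rw [norm_indicator_eq_indicator_norm]
    exact (setIntegral_Ioc_indicator_Ici hs.1).symm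

theorem integral_Ioc_integral_Ioc_eq_integral_Ioc_integral_Icc [NormedSpace ℝ E]
    (hF : Integrable ({p : ℝ × ℝ | p.2 ≤ p.1}.indicator (uncurry F))
      ((volume.restrict (Ioc a b)).prod (volume.restrict (Ioc a b)))) :
    ∫ t in Ioc a b, ∫ s in Ioc a t, F t s = ∫ s in Ioc a b, ∫ t in Icc s b, F t s := calc
  _ = ∫ t in Ioc a b, ∫ s in Ioc a b, (Iic t).indicator (F t) s :=
    setIntegral_congr_fun measurableSet_Ioc fun _ ht =>
      (setIntegral_Ioc_indicator_Iic ht.2).symm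
  _ = ∫ s in Ioc a b, ∫ t in Ioc a b, (Ici s).indicator (F · s) t := integral_integral_swap hF
  _ = _ := setIntegral_congr_fun measurableSet_Ioc fun _ hs => setIntegral_Ioc_indicator_Ici hs.1

end Dirichlet

theorem rlI_congr {c y α : ℝ} {g₁ g₂ : ℝ → ℝ} (hcy : c ≤ y) (h : EqOn g₁ g₂ (Icc c y)) :
    rlI c α g₁ y = rlI c α g₂ y := by
  unfold rlI
  split_ifs
  · exact h (right_mem_Icc.2 hcy)
  · congr 1
    refine intervalIntegral.integral_congr fun t ht => ?_
    rw [uIcc_of_le hcy] at ht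
    rw [h ht]

theorem integral_const_sub_rpow_mul_integral_sub_rpow_mul {γ μ c y : ℝ} {g : ℝ → ℝ}
    (hγ : 0 < γ) (hμ : 0 < μ) (hcy : c ≤ y)
    (hg : AEStronglyMeasurable g (volume.restrict (Ioc c y)))
    (hgw : IntegrableOn (fun s => (y - s) ^ (γ + μ - 1) * g s) (Ioc c y)) :
    ∫ t in c..y, (y - t) ^ (γ - 1) * ∫ s in c..t, (t - s) ^ (μ - 1) * g s
      = beta γ μ * ∫ s in c..y, (y - s) ^ (γ + μ - 1) * g s := by
  set K : ℝ → ℝ → ℝ := fun t s => (y - t) ^ (γ - 1) * ((t - s) ^ (μ - 1) * g s)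
  have hsec : ∀ s ∈ Ioo c y, ∀ z : ℝ,
      IntegrableOn (fun t => (y - t) ^ (γ - 1) * ((t - s) ^ (μ - 1) * z)) (Icc s y) := by
    intro s hs z
    simp_rw [← mul_assoc]
    exact ((intervalIntegrable_iff_integrableOn_Icc_of_le hs.2.le).1
      (intervalIntegrable_const_sub_rpow_mul_sub_const_rpow (by linarith) (by linarith)
        hs.2)).mul_const z
  have hbeta : ∀ s ∈ Ioo c y, ∀ z : ℝ,
      ∫ t in Icc s y, (y - t) ^ (γ - 1) * ((t - s) ^ (μ - 1) * z)
        = beta γ μ * ((y - s) ^ (γ + μ - 1) * z) := by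
    intro s hs z
    simp_rw [← mul_assoc]
    rw [integral_mul_const, integral_Icc_eq_integral_Ioc, ← intervalIntegral.integral_of_le hs.2.le,
      integral_const_sub_rpow_mul_sub_const_rpow hγ hμ hs.2]
  have hnorm : ∀ s ∈ Ioo c y,
      ∫ t in Icc s y, ‖K t s‖ = beta γ μ * ‖(y - s) ^ (γ + μ - 1) * g s‖ := by
    intro s hs
    rw [norm_mul, Real.norm_of_nonneg (Real.rpow_nonneg (sub_nonneg.2 hs.2.le) _), ← hbeta s hs]
    refine setIntegral_congr_fun measurableSet_Icc fun t ht => ?_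
    simp only [K, norm_mul, Real.norm_of_nonneg (Real.rpow_nonneg (sub_nonneg.2 ht.2) _),
      Real.norm_of_nonneg (Real.rpow_nonneg (sub_nonneg.2 ht.1) _)]
  have hmeas : AEStronglyMeasurable (uncurry K)
      ((volume.restrict (Ioc c y)).prod (volume.restrict (Ioc c y))) :=
    (Measurable.aestronglyMeasurable (by fun_prop)).mul
      ((Measurable.aestronglyMeasurable (by fun_prop)).mul hg.comp_snd)
  have hweight : IntegrableOn (fun s => beta γ μ * ‖(y - s) ^ (γ + μ - 1) * g s‖) (Ioc c y) :=
    hgw.norm.const_mul _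
  have hK := integrable_indicator_le_of_integrableOn_Icc hmeas
    (fun s hs => hsec s hs (g s))
    ((integrableOn_Ioc_iff_integrableOn_Ioo (by simp)).2
      ((hweight.mono_set Ioo_subset_Ioc_self).congr_fun (fun s hs => (hnorm s hs).symm)
        measurableSet_Ioo))
  calc _ = ∫ t in Ioc c y, ∫ s in Ioc c t, K t s := by
        rw [intervalIntegral.integral_of_le hcy]
        refine setIntegral_congr_fun measurableSet_Ioc fun t ht => ?_
        rw [intervalIntegral.integral_of_le ht.1.le, ← integral_const_mul]
    _ = ∫ s in Ioc c y, ∫ t in Icc s y, K t s :=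
        integral_Ioc_integral_Ioc_eq_integral_Ioc_integral_Icc hK
    _ = ∫ s in Ioc c y, beta γ μ * ((y - s) ^ (γ + μ - 1) * g s) := by
        rw [integral_Ioc_eq_integral_Ioo, integral_Ioc_eq_integral_Ioo]
        exact setIntegral_congr_fun measurableSet_Ioo fun s hs => hbeta s hs (g s)
    _ = _ := by rw [integral_const_mul, intervalIntegral.integral_of_le hcy]

theorem rlI_add {γ μ c y : ℝ} {g : ℝ → ℝ} (hγ : 0 < γ) (hμ : 0 < μ) (hcy : c ≤ y)
    (hg : AEStronglyMeasurable g (volume.restrict (Ioc c y)))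
    (hgw : IntegrableOn (fun s => (y - s) ^ (γ + μ - 1) * g s) (Ioc c y)) :
    rlI c γ (rlI c μ g) y = rlI c (γ + μ) g y := by
  simp only [rlI, if_neg hγ.ne', if_neg hμ.ne', if_neg (add_pos hγ hμ).ne']
  simp_rw [mul_left_comm _ (Real.Gamma μ)⁻¹]
  rw [intervalIntegral.integral_const_mul,
    integral_const_sub_rpow_mul_integral_sub_rpow_mul hγ hμ hcy hg hgw, beta]
  have hΓγ := Real.Gamma_pos_of_pos hγ
  have hΓμ := Real.Gamma_pos_of_pos hμ
  field_simp

section PsiToRL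

variable {Ψ : ℝ → ℝ} {a x : ℝ}

theorem continuousOn_of_deriv_pos {s : Set ℝ} (hΨ : ∀ t ∈ s, 0 < deriv Ψ t) :
    ContinuousOn Ψ s :=
  fun t ht => (differentiableAt_of_deriv_ne_zero (hΨ t ht).ne').continuousAt.continuousWithinAt

theorem strictMonoOn_Icc_of_deriv_pos (hΨ : ∀ t ∈ Icc a x, 0 < deriv Ψ t) :
    StrictMonoOn Ψ (Icc a x) :=
  strictMonoOn_of_deriv_pos (convex_Icc a x) (continuousOn_of_deriv_pos hΨ)
    fun t ht => hΨ t (interior_subset ht)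

theorem invFunOn_apply_of_deriv_pos (hΨ : ∀ t ∈ Icc a x, 0 < deriv Ψ t) {t : ℝ}
    (ht : t ∈ Icc a x) : invFunOn Ψ (Icc a x) (Ψ t) = t :=
  (strictMonoOn_Icc_of_deriv_pos hΨ).injOn.leftInvOn_invFunOn ht

theorem psiI_eq_rlI_comp_invFunOn (hΨ : ∀ t ∈ Icc a x, 0 < deriv Ψ t) {y : ℝ}
    (hy : y ∈ Icc a x) (f : ℝ → ℝ) (α : ℝ) :
    psiI a Ψ f α y = rlI (Ψ a) α (f ∘ invFunOn Ψ (Icc a x)) (Ψ y) := by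
  have hsub : uIcc a y ⊆ Icc a x := (uIcc_of_le hy.1).symm ▸ Icc_subset_Icc_right hy.2
  have hIoo : Ioo (min a y) (max a y) ⊆ Icc a x := Ioo_subset_Icc_self.trans hsub
  unfold psiI rlI
  split_ifs
  · rw [comp_apply, invFunOn_apply_of_deriv_pos hΨ hy]
  · congr 1
    rw [← intervalIntegral.integral_deriv_smul_comp_of_deriv_nonneg
      (g := fun u => (Ψ y - u) ^ (α - 1) * (f ∘ invFunOn Ψ (Icc a x)) u)
      ((continuousOn_of_deriv_pos hΨ).mono hsub)
      (fun t ht => (differentiableAt_of_deriv_ne_zero (hΨ t (hIoo ht)).ne').hasDerivAt)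
      (fun t ht => (hΨ t (hIoo ht)).le)]
    refine intervalIntegral.integral_congr fun t ht => ?_
    rw [smul_eq_mul, comp_apply, comp_apply, invFunOn_apply_of_deriv_pos hΨ (hsub ht), mul_assoc]

theorem integrableOn_comp_invFunOn_of_deriv_pos (hΨ : ∀ t ∈ Icc a x, 0 < deriv Ψ t)
    (hax : a ≤ x) {f : ℝ → ℝ} (hf : ContinuousOn f (Icc a x)) :
    IntegrableOn (f ∘ invFunOn Ψ (Icc a x)) (Icc (Ψ a) (Ψ x)) := by
  have hderiv : ∀ t ∈ Ioo a x, HasDerivAt Ψ (deriv Ψ t) t := fun t ht =>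
    (differentiableAt_of_deriv_ne_zero (hΨ t (Ioo_subset_Icc_self ht)).ne').hasDerivAt
  have hnonneg : ∀ t ∈ Ioo a x, 0 ≤ deriv Ψ t := fun t ht => (hΨ t (Ioo_subset_Icc_self ht)).le
  have hderiv_int : IntegrableOn (deriv Ψ) (Icc a x) :=
    (integrableOn_Icc_iff_integrableOn_Ioc (by simp)).2
      (intervalIntegral.integrableOn_deriv_of_nonneg (continuousOn_of_deriv_pos hΨ) hderiv hnonneg)
  rw [← integrableOn_Icc_deriv_smul_iff_of_deriv_nonneg (continuousOn_of_deriv_pos hΨ) hderiv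
    hnonneg hax]
  exact (hderiv_int.mul_continuousOn hf isCompact_Icc).congr_fun
    (fun t ht => by rw [smul_eq_mul, comp_apply, invFunOn_apply_of_deriv_pos hΨ ht])
    measurableSet_Icc

end PsiToRL

theorem psiI_semigroup_general
    (a b : ℝ) (Ψ : ℝ → ℝ)
    (hΨpos : ∀ t ∈ Set.Icc a b, 0 < deriv Ψ t)
    (γ μ : ℝ) (hγ : 0 < γ) (hμ : 0 < μ)
    (f : ℝ → ℝ) (hf : ContinuousOn f (Set.Icc a b))
    (x : ℝ) (hx : x ∈ Set.Ioc a b) :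
    psiI a Ψ (fun y => psiI a Ψ f μ y) γ x = psiI a Ψ f (γ + μ) x := by
  have hax : a ≤ x := hx.1.le
  have hsub : Icc a x ⊆ Icc a b := Icc_subset_Icc_right hx.2
  have hΨ : ∀ t ∈ Icc a x, 0 < deriv Ψ t := fun t ht => hΨpos t (hsub ht)
  have hxmem : x ∈ Icc a x := right_mem_Icc.2 hax
  have hΨax : Ψ a ≤ Ψ x :=
    (strictMonoOn_Icc_of_deriv_pos hΨ).monotoneOn (left_mem_Icc.2 hax) hxmem hax
  have hsurj : SurjOn Ψ (Icc a x) (Icc (Ψ a) (Ψ x)) :=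
    intermediate_value_Icc hax (continuousOn_of_deriv_pos hΨ)
  set g := f ∘ invFunOn Ψ (Icc a x)
  have hinner : EqOn ((fun y => psiI a Ψ f μ y) ∘ invFunOn Ψ (Icc a x)) (rlI (Ψ a) μ g)
      (Icc (Ψ a) (Ψ x)) := fun u hu => by
    rw [comp_apply, psiI_eq_rlI_comp_invFunOn hΨ (hsurj.mapsTo_invFunOn hu),
      hsurj.rightInvOn_invFunOn hu]
  obtain ⟨C, hC⟩ := isCompact_Icc.exists_bound_of_continuousOn (hf.mono hsub)
  have hgC : ∀ u ∈ Ioc (Ψ a) (Ψ x), ‖g u‖ ≤ C := fun u hu =>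
    hC _ (hsurj.mapsTo_invFunOn (Ioc_subset_Icc_self hu))
  have hg := (integrableOn_comp_invFunOn_of_deriv_pos hΨ hax (hf.mono hsub)).mono_set
    Ioc_subset_Icc_self
  rw [psiI_eq_rlI_comp_invFunOn hΨ hxmem, psiI_eq_rlI_comp_invFunOn hΨ hxmem,
    rlI_congr hΨax hinner, rlI_add hγ hμ hΨax hg.aestronglyMeasurable
      (integrableOn_const_sub_rpow_mul_of_norm_le (by linarith) hg.aestronglyMeasurable hgC)]

/-- semigroup property of the Ψ-fractional integral. -/
theorem psiI_semigroup
    (a b : ℝ) (hab : a < b) (Ψ : ℝ → ℝ)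
    (hΨmono : StrictMonoOn Ψ (Set.Icc a b))
    (hΨC1 : ContDiffOn ℝ 1 Ψ (Set.Icc a b))
    (hΨpos : ∀ t ∈ Set.Icc a b, 0 < deriv Ψ t)
    (γ μ : ℝ) (hγ : 0 < γ) (hμ : 0 < μ)
    (f : ℝ → ℝ) (hf : ContinuousOn f (Set.Icc a b))
    (x : ℝ) (hx : x ∈ Set.Ioc a b) :
    psiI a Ψ (fun y => psiI a Ψ f μ y) γ x = psiI a Ψ f (γ + μ) x :=
  psiI_semigroup_general a b Ψ hΨpos γ μ hγ hμ f hf x hx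
end

section
/- (Ψ-differentiation lowers the order of the Ψ-fractional integral by one.) Let a < b, Ψ : ℝ → ℝ strictly increasing and continuously differentiable on [a,b] with Ψ'(t) > 0 for all t ∈ [a,b], and f : ℝ → ℝ continuous on [a,b]. Then for every γ > 0 and every x ∈ (a,b): (1/Ψ'(x)) d/dx (I^{γ+1;Ψ} f)(x) = (I^{γ;Ψ} f)(x); moreover for γ = 0: (1/Ψ'(x)) d/dx (I^{1;Ψ} f)(x) = f(x). -/
open Real

/-!
Substituting `u = Ψ t` turns `psiI a Ψ f α` into the classical Riemann–Liouville integral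
`rlI (Ψ a) α g`, where `g` is continuous with `g ∘ Ψ = f` on `[a, b]`; by the chain rule it then
suffices to show `d/dX I^{γ+1} g = I^γ g`. Dirichlet's formula (Fubini over the triangle
`A ≤ u ≤ s ≤ X`) gives `I^{γ+1} g X = ∫ s in A..X, I^γ g s`, and `I^γ g` is continuous because
the substitution `w = (s - u) ^ γ` removes the singularity of its kernel, so the fundamental
theorem of calculus applies.
-/

open Set MeasureTheory

theorem ContinuousOn.exists_continuous_comp_eq_of_strictMonoOn {a b : ℝ} {Ψ f : ℝ → ℝ}
    (hf : ContinuousOn f (Icc a b)) (hab : a ≤ b) (hΨ : ContinuousOn Ψ (Icc a b))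
    (hmono : StrictMonoOn Ψ (Icc a b)) :
    ∃ g : ℝ → ℝ, Continuous g ∧ ∀ t ∈ Icc a b, g (Ψ t) = f t := by
  let e : Icc a b → Icc (Ψ a) (Ψ b) := fun t => ⟨Ψ t, hmono.monotoneOn.mapsTo_Icc t.2⟩
  have he : StrictMono e := fun s t hst => hmono s.2 t.2 hst
  have hsurj : Function.Surjective e := by
    rintro ⟨u, hu⟩
    rw [← hΨ.image_Icc_of_monotoneOn hab hmono.monotoneOn] at hu
    obtain ⟨t, ht, rfl⟩ := hu
    exact ⟨⟨t, ht⟩, rfl⟩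
  let E := he.orderIsoOfSurjective e hsurj
  refine ⟨IccExtend (hmono.monotoneOn ⟨le_rfl, hab⟩ ⟨hab, le_rfl⟩ hab) (fun u => f (E.symm u)),
    continuous_IccExtend_iff.2 (hf.domRestrict.comp E.symm.continuous), fun t ht => ?_⟩
  rw [IccExtend_of_mem _ _ (hmono.monotoneOn.mapsTo_Icc ht)]
  exact congrArg (fun s : Icc a b => f s) (E.symm_apply_apply ⟨t, ht⟩)

theorem intervalIntegral_integral_swap_triangle {A X : ℝ} {H : ℝ → ℝ → ℝ} (hAX : A ≤ X)
    (hH : Integrable (Function.uncurry fun s u => if u ≤ s then H s u else 0)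
      ((volume.restrict (Ioc A X)).prod (volume.restrict (Ioc A X)))) :
    ∫ s in A..X, ∫ u in A..s, H s u = ∫ u in A..X, ∫ s in u..X, H s u := by
  rw [intervalIntegral.integral_of_le hAX, intervalIntegral.integral_of_le hAX]
  calc ∫ s in Ioc A X, ∫ u in A..s, H s u
      = ∫ s in Ioc A X, ∫ u in Ioc A X, if u ≤ s then H s u else 0 := by
        refine setIntegral_congr_fun measurableSet_Ioc fun s hs => ?_
        have hind : ∀ u, (if u ≤ s then H s u else 0) = (Iic s).indicator (H s) u := fun u => by
          simp only [indicator_apply, mem_Iic]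
        simp only [hind]
        rw [integral_indicator measurableSet_Iic, Measure.restrict_restrict measurableSet_Iic,
          Iic_inter_Ioc_of_le hs.2, intervalIntegral.integral_of_le hs.1.le]
    _ = ∫ u in Ioc A X, ∫ s in Ioc A X, if u ≤ s then H s u else 0 := integral_integral_swap hH
    _ = ∫ u in Ioc A X, ∫ s in u..X, H s u := by
        refine setIntegral_congr_fun measurableSet_Ioc fun u hu => ?_
        have hset : Ici u ∩ Ioc A X = Icc u X := by
          ext s
          simp only [mem_inter_iff, mem_Ici, mem_Ioc, mem_Icc]
          constructor
          · rintro ⟨h₁, -, h₂⟩; exact ⟨h₁, h₂⟩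
          · rintro ⟨h₁, h₂⟩; exact ⟨h₁, hu.1.trans_le h₁, h₂⟩
        have hind : ∀ s, (if u ≤ s then H s u else 0) = (Ici u).indicator (H · u) s := fun s => by
          simp only [indicator_apply, mem_Ici]
        simp only [hind]
        rw [integral_indicator measurableSet_Ici, Measure.restrict_restrict measurableSet_Ici,
          hset, integral_Icc_eq_integral_Ioc, intervalIntegral.integral_of_le hu.2]

theorem integrable_indicator_Ico_rpow {γ : ℝ} (hγ : 0 < γ) (L : ℝ) :
    Integrable ((Ico 0 L).indicator fun v => v ^ (γ - 1)) :=
  (integrable_indicator_iff measurableSet_Ico).2 <|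
    ((intervalIntegrable_iff' (by simp)).1
      (intervalIntegral.intervalIntegrable_rpow' (by linarith))).mono_set
      (Ico_subset_Icc_self.trans Icc_subset_uIcc)

theorem integral_sub_rpow_mul_eq_integral_integral {A X γ : ℝ} {g : ℝ → ℝ} (hAX : A ≤ X)
    (hγ : 0 < γ) (hg : IntegrableOn g (Ioc A X)) :
    ∫ u in A..X, (X - u) ^ γ * g u = γ * ∫ s in A..X, ∫ u in A..s, (s - u) ^ (γ - 1) * g u := by
  -- On the square `Ioc A X ×ˢ Ioc A X`, `k (s - u)` is the kernel cut off to the triangle `u ≤ s`;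
  -- the cutoff at `X - A` makes `k` integrable, so `g u * k (s - u)` is a convolution integrand.
  let k : ℝ → ℝ := (Ico 0 (X - A)).indicator fun v => v ^ (γ - 1)
  have hconv : Integrable (fun p : ℝ × ℝ => g p.2 * k (p.1 - p.2))
      ((volume.restrict (Ioc A X)).prod (volume.restrict (Ioc A X))) :=
    (hg.convolution_integrand (ContinuousLinearMap.mul ℝ ℝ)
      (integrable_indicator_Ico_rpow hγ _)).mono_measure
      (Measure.prod_mono Measure.restrict_le_self le_rfl)
  rw [intervalIntegral_integral_swap_triangle hAX, ← intervalIntegral.integral_const_mul]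
  · refine intervalIntegral.integral_congr fun u hu => ?_
    rw [uIcc_of_le hAX] at hu
    rw [intervalIntegral.integral_mul_const,
      intervalIntegral.integral_comp_sub_right (fun v => v ^ (γ - 1)),
      integral_rpow (Or.inl (by linarith)), sub_self, sub_add_cancel, zero_rpow hγ.ne',
      sub_zero]
    field_simp
  · refine hconv.congr ?_
    rw [Measure.prod_restrict]
    filter_upwards [ae_restrict_mem (measurableSet_Ioc.prod measurableSet_Ioc)] with p hp
    have hkp : p.1 - p.2 ∈ Ico 0 (X - A) ↔ p.2 ≤ p.1 := by
      simp only [mem_Ico, sub_nonneg, and_iff_left_iff_imp]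
      intro; linarith [hp.1.2, hp.2.1]
    simp only [k, indicator_apply, hkp, Function.uncurry_def]
    split_ifs <;> ring

theorem rlI_zero (A : ℝ) (g : ℝ → ℝ) : rlI A 0 g = g :=
  funext fun _ => if_pos rfl

theorem rlI_add_one_eq_integral_rlI {A X γ : ℝ} {g : ℝ → ℝ} (hAX : A ≤ X) (hγ : 0 ≤ γ)
    (hg : IntegrableOn g (Ioc A X)) :
    rlI A (γ + 1) g X = ∫ s in A..X, rlI A γ g s := by
  rcases hγ.eq_or_lt with rfl | hγ
  · simp [rlI]
  have hΓ : Gamma γ ≠ 0 := (Gamma_pos_of_pos hγ).ne'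
  simp only [rlI, if_neg hγ.ne', if_neg (by linarith : γ + 1 ≠ 0), add_sub_cancel_right,
    integral_sub_rpow_mul_eq_integral_integral hAX hγ hg, intervalIntegral.integral_const_mul,
    Gamma_add_one hγ.ne']
  field_simp

theorem integral_sub_rpow_mul_eq_integral_comp_rpow_inv {A s γ : ℝ} (hs : A ≤ s) (hγ : 0 < γ)
    (g : ℝ → ℝ) :
    ∫ u in A..s, (s - u) ^ (γ - 1) * g u = γ⁻¹ * ∫ w in 0..(s - A) ^ γ, g (s - w ^ γ⁻¹) := by
  have hreflect : ∫ u in A..s, (s - u) ^ (γ - 1) * g u =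
      ∫ v in 0..s - A, v ^ (γ - 1) * g (s - v) := by
    simpa using intervalIntegral.integral_comp_sub_left (fun v => v ^ (γ - 1) * g (s - v)) s
      (a := A) (b := s)
  have hsubst : ∫ v in 0..s - A, (γ * v ^ (γ - 1)) • g (s - (v ^ γ) ^ γ⁻¹) =
      ∫ w in (0 : ℝ) ^ γ..(s - A) ^ γ, g (s - w ^ γ⁻¹) := by
    refine intervalIntegral.integral_deriv_smul_comp_of_deriv_nonneg
      (g := fun w => g (s - w ^ γ⁻¹)) (continuous_rpow_const hγ.le).continuousOn
      (fun v hv => ?_) (fun v hv => ?_)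
    · have hv0 : 0 < v := by simpa [hs] using hv.1
      exact hasDerivAt_rpow_const (Or.inl hv0.ne')
    · have hv0 : 0 < v := by simpa [hs] using hv.1
      positivity
  rw [zero_rpow hγ.ne'] at hsubst
  rw [hreflect, ← hsubst, ← intervalIntegral.integral_const_mul]
  refine intervalIntegral.integral_congr fun v hv => ?_
  have hv0 : 0 ≤ v := by simp only [uIcc_of_le (sub_nonneg.2 hs), mem_Icc] at hv; exact hv.1
  rw [smul_eq_mul, rpow_rpow_inv hv0 hγ.ne']
  field_simp

theorem continuousOn_rlI {A γ : ℝ} {g : ℝ → ℝ} (hg : Continuous g) (hγ : 0 ≤ γ) :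
    ContinuousOn (rlI A γ g) (Ici A) := by
  rcases hγ.eq_or_lt with rfl | hγ
  · exact (rlI_zero A g).symm ▸ hg.continuousOn
  have hcont : Continuous fun s =>
      (Gamma γ)⁻¹ * (γ⁻¹ * ∫ w in 0..(s - A) ^ γ, g (s - w ^ γ⁻¹)) := by
    have := continuous_rpow_const (inv_nonneg.2 hγ.le)
    have := continuous_rpow_const hγ.le
    fun_prop
  refine hcont.continuousOn.congr fun s hs => ?_
  rw [rlI, if_neg hγ.ne', integral_sub_rpow_mul_eq_integral_comp_rpow_inv hs hγ]

theorem hasDerivAt_rlI_add_one {A X γ : ℝ} {g : ℝ → ℝ} (hg : Continuous g) (hγ : 0 ≤ γ)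
    (hX : A < X) : HasDerivAt (rlI A (γ + 1) g) (rlI A γ g X) X := by
  have hcont := continuousOn_rlI (A := A) hg hγ
  have hFTC : HasDerivAt (fun y => ∫ s in A..y, rlI A γ g s) (rlI A γ g X) X :=
    intervalIntegral.integral_hasDerivAt_right
      (hcont.mono (uIcc_of_le hX.le ▸ Icc_subset_Ici_self)).intervalIntegrable
      ((hcont.mono Ioi_subset_Ici_self).stronglyMeasurableAtFilter isOpen_Ioi X hX)
      (hcont.continuousAt (Ici_mem_nhds hX))
  refine hFTC.congr_of_eventuallyEq ?_
  filter_upwards [Ioi_mem_nhds hX] with y hy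
  exact rlI_add_one_eq_integral_rlI hy.le hγ hg.integrableOn_Ioc

theorem psiI_eq_rlI_comp {a y : ℝ} {Ψ f g : ℝ → ℝ} (hay : a ≤ y)
    (hΨ : ∀ t ∈ Icc a y, DifferentiableAt ℝ Ψ t) (hΨ' : ∀ t ∈ Icc a y, 0 ≤ deriv Ψ t)
    (hfg : ∀ t ∈ Icc a y, g (Ψ t) = f t) (α : ℝ) :
    psiI a Ψ f α y = rlI (Ψ a) α g (Ψ y) := by
  unfold psiI rlI
  split_ifs
  · exact (hfg y ⟨hay, le_rfl⟩).symm
  congr 1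
  rw [← intervalIntegral.integral_deriv_smul_comp_of_deriv_nonneg
      (g := fun u => (Ψ y - u) ^ (α - 1) * g u)
      (fun t ht => (hΨ t (uIcc_of_le hay ▸ ht)).continuousAt.continuousWithinAt)
      (fun t ht => (hΨ t (Ioo_subset_Icc_self (by simpa [hay] using ht))).hasDerivAt)
      (fun t ht => hΨ' t (Ioo_subset_Icc_self (by simpa [hay] using ht)))]
  refine intervalIntegral.integral_congr fun t ht => ?_
  rw [smul_eq_mul, Function.comp_apply, hfg t (uIcc_of_le hay ▸ ht), mul_assoc]

theorem hasDerivAt_psiI_add_one {a b x γ : ℝ} {Ψ f : ℝ → ℝ}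
    (hΨmono : StrictMonoOn Ψ (Icc a b)) (hΨpos : ∀ t ∈ Icc a b, 0 < deriv Ψ t)
    (hf : ContinuousOn f (Icc a b)) (hγ : 0 ≤ γ) (hx : x ∈ Ioo a b) :
    HasDerivAt (psiI a Ψ f (γ + 1)) (psiI a Ψ f γ x * deriv Ψ x) x := by
  have hxI : x ∈ Icc a b := Ioo_subset_Icc_self hx
  have hΨ : ∀ t ∈ Icc a b, DifferentiableAt ℝ Ψ t := fun t ht =>
    differentiableAt_of_deriv_ne_zero (hΨpos t ht).ne'
  have hab : a ≤ b := (hx.1.trans hx.2).le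
  obtain ⟨g, hg, hfg⟩ := hf.exists_continuous_comp_eq_of_strictMonoOn hab
    (fun t ht => (hΨ t ht).continuousAt.continuousWithinAt) hΨmono
  have htransfer : ∀ α, ∀ y ∈ Icc a b, psiI a Ψ f α y = rlI (Ψ a) α g (Ψ y) :=
    fun α y hy => psiI_eq_rlI_comp hy.1
      (fun t ht => hΨ t ⟨ht.1, ht.2.trans hy.2⟩) (fun t ht => (hΨpos t ⟨ht.1, ht.2.trans hy.2⟩).le)
      (fun t ht => hfg t ⟨ht.1, ht.2.trans hy.2⟩) α
  have hchain := (hasDerivAt_rlI_add_one hg hγ (hΨmono ⟨le_rfl, hab⟩ hxI hx.1)).comp x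
    (hΨ x hxI).hasDerivAt
  rw [← htransfer γ x hxI] at hchain
  refine hchain.congr_of_eventuallyEq ?_
  filter_upwards [Icc_mem_nhds hx.1 hx.2] with y hy using htransfer _ y hy

theorem psiI_zero (a : ℝ) (Ψ f : ℝ → ℝ) : psiI a Ψ f 0 = f :=
  funext fun _ => if_pos rfl

theorem psiI_deriv_lowers_order_general
    (a b : ℝ) (Ψ : ℝ → ℝ)
    (hΨmono : StrictMonoOn Ψ (Set.Icc a b))
    (hΨpos : ∀ t ∈ Set.Icc a b, 0 < deriv Ψ t)
    (f : ℝ → ℝ) (hf : ContinuousOn f (Set.Icc a b))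
    (γ : ℝ) (hγ : 0 < γ)
    (x : ℝ) (hx : x ∈ Set.Ioo a b) :
    (deriv Ψ x)⁻¹ * deriv (fun y => psiI a Ψ f (γ + 1) y) x = psiI a Ψ f γ x ∧
    (deriv Ψ x)⁻¹ * deriv (fun y => psiI a Ψ f 1 y) x = f x := by
  have hΨx : deriv Ψ x ≠ 0 := (hΨpos x (Ioo_subset_Icc_self hx)).ne'
  have hlower : ∀ β : ℝ, 0 ≤ β →
      (deriv Ψ x)⁻¹ * deriv (fun y => psiI a Ψ f (β + 1) y) x = psiI a Ψ f β x := fun β hβ => by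
    rw [(hasDerivAt_psiI_add_one hΨmono hΨpos hf hβ hx).deriv, mul_comm, mul_assoc,
      mul_inv_cancel₀ hΨx, mul_one]
  exact ⟨hlower γ hγ.le, by simpa only [zero_add, psiI_zero] using hlower 0 le_rfl⟩

/-- Ψ-differentiation lowers the order of the Ψ-fractional integral
by one; for order one it recovers the function. -/
theorem psiI_deriv_lowers_order
    (a b : ℝ) (hab : a < b) (Ψ : ℝ → ℝ)
    (hΨmono : StrictMonoOn Ψ (Set.Icc a b))
    (hΨC1 : ContDiffOn ℝ 1 Ψ (Set.Icc a b))
    (hΨpos : ∀ t ∈ Set.Icc a b, 0 < deriv Ψ t)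
    (f : ℝ → ℝ) (hf : ContinuousOn f (Set.Icc a b))
    (γ : ℝ) (hγ : 0 < γ)
    (x : ℝ) (hx : x ∈ Set.Ioo a b) :
    (deriv Ψ x)⁻¹ * deriv (fun y => psiI a Ψ f (γ + 1) y) x = psiI a Ψ f γ x ∧
    (deriv Ψ x)⁻¹ * deriv (fun y => psiI a Ψ f 1 y) x = f x :=
  psiI_deriv_lowers_order_general a b Ψ hΨmono hΨpos f hf γ hγ x hx
end
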